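/- arXiv:1909.09518 — 3 statements merged into one kernel-verified Lean document; each statement's English description precedes it below -/
import Mathlib

section
/- Let B be a nondegenerate bilinear form on ℂ^k whose symmetric part Q and skew part Λ satisfy: Λ vanishes identically on a subspace E of dimension 2, Q vanishes identically on a complement F of dimension k−2, and ℂ^k = E ⊕ F (so that B = Q|_E ⊕ Λ|_F block-diagonally, with Q|_E and Λ|_F nondegenerate, k even). Then h_B = so(Q|_E) ⊕ sp(Λ|_F) and dim h_B = 1 + (k−2)(k−1)/2 = binom(k,2) − k + 2. -/
/-!
Write `X = [[A, B], [C, D]]` in the blocks of `ℂ^k = E ⊕ F`. The off-diagonal blocks of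
`XB + BXᵀ` are `B L + Q Cᵀ` and `C Q + L Bᵀ`; transposing the second (`Q` symmetric, `L` skew)
and subtracting gives `2 B L = 0`, so `B = 0` and then `C = 0` since `L` and `Q` are invertible.
On the diagonal, right multiplication by the invertible `Q` (resp. `L`) turns
`A Q + Q Aᵀ = 0` into skew-symmetry of `A Q` (resp. `D L + L Dᵀ = 0` into symmetry of
`D L`), so `so(Q) ≅ Λ²ℂ²` has dimension `1` and `sp(L) ≅ Sym²ℂ^(k-2)` has dimension
`binom(k-1, 2)`.
-/

open Matrix

/-- The linear map `X ↦ XB + BXᵗ`; its kernel is the symmetry Lie algebra `h_B`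
of the bilinear form `B`, i.e. the Lie algebra of the stabilizer of `B` under
`g · B = g B gᵗ`. -/
noncomputable def formActionL (n : Type*) [Fintype n] [DecidableEq n]
    (B : Matrix n n ℂ) : Matrix n n ℂ →ₗ[ℂ] Matrix n n ℂ where
  toFun X := X * B + B * Xᵀ
  map_add' X Y := by
    simp only [Matrix.transpose_add, Matrix.add_mul, Matrix.mul_add]
    abel
  map_smul' t X := by
    simp only [Matrix.transpose_smul, Matrix.smul_mul, Matrix.mul_smul,
      RingHom.id_apply, smul_add]

section SymmetricAndSkew

variable (n K : Type*) [Field K]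

def symmetricMatrices : Submodule K (Matrix n n K) where
  carrier := {A | Aᵀ = A}
  add_mem' {A B} hA hB := by simp_all [transpose_add]
  zero_mem' := transpose_zero
  smul_mem' c A hA := by simp_all [transpose_smul]

def skewSymmetricMatrices : Submodule K (Matrix n n K) where
  carrier := {A | Aᵀ = -A}
  add_mem' {A B} hA hB := by simp_all [transpose_add, add_comm]
  zero_mem' := by simp
  smul_mem' c A hA := by simp_all [transpose_smul]

variable {n K}

theorem mem_symmetricMatrices {A : Matrix n n K} :
    A ∈ symmetricMatrices n K ↔ Aᵀ = A := Iff.rfl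

theorem mem_skewSymmetricMatrices {A : Matrix n n K} :
    A ∈ skewSymmetricMatrices n K ↔ Aᵀ = -A := Iff.rfl

variable (n K)

def symmetricMatricesEquivSym2 : symmetricMatrices n K ≃ₗ[K] (Sym2 n → K) where
  toFun A := Sym2.lift ⟨A.1, fun i j => congrFun₂ A.2 j i⟩
  invFun f := ⟨of fun i j => f s(i, j), by ext i j; simp [Sym2.eq_swap]⟩
  map_add' A B := funext <| Sym2.ind fun _ _ => rfl
  map_smul' c A := funext <| Sym2.ind fun _ _ => rfl
  left_inv A := rfl
  right_inv f := funext <| Sym2.ind fun _ _ => rfl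

theorem finrank_symmetricMatrices [Fintype n] :
    Module.finrank K (symmetricMatrices n K) = (Fintype.card n + 1).choose 2 := by
  rw [(symmetricMatricesEquivSym2 n K).finrank_eq, Module.finrank_fintype_fun_eq_card,
    Sym2.card]

variable {n K} [NeZero (2 : K)]

theorem diag_eq_zero_of_mem_skewSymmetricMatrices {A : Matrix n n K}
    (hA : A ∈ skewSymmetricMatrices n K) (i : n) : A i i = 0 := by
  have hii : A i i = -A i i := congrFun₂ hA i i
  have h : (2 : K) * A i i = 0 := by linear_combination hii
  exact (mul_eq_zero.mp h).resolve_left two_ne_zero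

variable (n K) [LinearOrder n]

def skewSymmetricMatricesEquiv :
    skewSymmetricMatrices n K ≃ₗ[K] ({p : n × n // p.1 < p.2} → K) where
  toFun A p := A.1 p.1.1 p.1.2
  invFun f := ⟨of fun i j =>
      if h : i < j then f ⟨(i, j), h⟩ else if h' : j < i then -f ⟨(j, i), h'⟩ else 0, by
    ext i j
    rcases lt_trichotomy i j with h | rfl | h
    · simp [h, h.not_gt]
    · simp
    · simp [h, h.not_gt]⟩
  map_add' A B := rfl
  map_smul' c A := rfl
  left_inv A := by
    ext i j
    rcases lt_trichotomy i j with h | rfl | h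
    · simp [h]
    · simp [diag_eq_zero_of_mem_skewSymmetricMatrices A.2]
    · have hji : A.1 j i = -A.1 i j := congrFun₂ A.2 i j
      simp [h, h.not_gt, hji]
  right_inv f := by
    ext p
    simp [p.2]

theorem finrank_skewSymmetricMatrices [Fintype n] :
    Module.finrank K (skewSymmetricMatrices n K) = (Fintype.card n).choose 2 := by
  rw [(skewSymmetricMatricesEquiv n K).finrank_eq, Module.finrank_fintype_fun_eq_card,
    Fintype.card_subtype, Fintype.card_product_filter_lt]

end SymmetricAndSkew

theorem finrank_comap_mulRight {n K : Type*} [Fintype n] [DecidableEq n] [CommRing K]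
    {U : Submodule K (Matrix n n K)} {Q : Matrix n n K} (hQ : IsUnit Q.det) :
    Module.finrank K (U.comap (LinearMap.mulRight K Q)) = Module.finrank K U :=
  (LinearEquiv.ofSubmodule'
    (((isUnit_iff_isUnit_det Q).mpr hQ).unit.mulRightLinearEquiv K) U).finrank_eq

section FormAction

variable {n : Type*} [Fintype n] [DecidableEq n]

theorem formActionL_apply (B X : Matrix n n ℂ) : formActionL n B X = X * B + B * Xᵀ := rfl

theorem ker_formActionL_eq_comap_skew {Q : Matrix n n ℂ} (hQ : Qᵀ = Q) :
    LinearMap.ker (formActionL n Q) =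
      (skewSymmetricMatrices n ℂ).comap (LinearMap.mulRight ℂ Q) := by
  ext X
  rw [LinearMap.mem_ker, Submodule.mem_comap, mem_skewSymmetricMatrices, formActionL_apply,
    LinearMap.mulRight_apply, transpose_mul, hQ, eq_neg_iff_add_eq_zero, add_comm]

theorem ker_formActionL_eq_comap_symm {L : Matrix n n ℂ} (hL : Lᵀ = -L) :
    LinearMap.ker (formActionL n L) =
      (symmetricMatrices n ℂ).comap (LinearMap.mulRight ℂ L) := by
  ext X
  rw [LinearMap.mem_ker, Submodule.mem_comap, mem_symmetricMatrices, formActionL_apply,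
    LinearMap.mulRight_apply, transpose_mul, hL, neg_mul, neg_eq_iff_add_eq_zero,
    add_comm]

theorem finrank_ker_formActionL_of_symm [LinearOrder n] {Q : Matrix n n ℂ} (hQ : Qᵀ = Q)
    (hQnd : IsUnit Q.det) :
    Module.finrank ℂ (LinearMap.ker (formActionL n Q)) = (Fintype.card n).choose 2 := by
  rw [ker_formActionL_eq_comap_skew hQ, finrank_comap_mulRight hQnd,
    finrank_skewSymmetricMatrices]

theorem finrank_ker_formActionL_of_skew {L : Matrix n n ℂ} (hL : Lᵀ = -L)
    (hLnd : IsUnit L.det) :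
    Module.finrank ℂ (LinearMap.ker (formActionL n L)) = (Fintype.card n + 1).choose 2 := by
  rw [ker_formActionL_eq_comap_symm hL, finrank_comap_mulRight hLnd,
    finrank_symmetricMatrices]

end FormAction

section Blocks

variable {n o : Type*} [Fintype n] [DecidableEq n] [Fintype o] [DecidableEq o]

theorem formActionL_fromBlocks (Q : Matrix n n ℂ) (L : Matrix o o ℂ) (A : Matrix n n ℂ)
    (B : Matrix n o ℂ) (C : Matrix o n ℂ) (D : Matrix o o ℂ) :
    formActionL (n ⊕ o) (fromBlocks Q 0 0 L) (fromBlocks A B C D) =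
      fromBlocks (formActionL n Q A) (B * L + Q * Cᵀ) (C * Q + L * Bᵀ) (formActionL o L D) := by
  simp [formActionL_apply, fromBlocks_transpose, fromBlocks_multiply, fromBlocks_add]

theorem offDiag_eq_zero_of_symm_skew {K : Type*} [Field K] [NeZero (2 : K)]
    {Q : Matrix n n K} {L : Matrix o o K} (hQ : Qᵀ = Q) (hQnd : IsUnit Q.det) (hL : Lᵀ = -L)
    (hLnd : IsUnit L.det) {B : Matrix n o K} {C : Matrix o n K}
    (h₁₂ : B * L + Q * Cᵀ = 0) (h₂₁ : C * Q + L * Bᵀ = 0) : B = 0 ∧ C = 0 := by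
  have h₂₁' : Q * Cᵀ - B * L = 0 := by
    simpa [transpose_mul, hQ, hL, sub_eq_add_neg, add_comm] using congrArg transpose h₂₁
  have hBL : B * L = 0 := by
    have h : (2 : K) • (B * L) = 0 :=
      calc (2 : K) • (B * L) = (B * L + Q * Cᵀ) - (Q * Cᵀ - B * L) := by
            rw [two_smul]; abel
        _ = 0 := by rw [h₁₂, h₂₁', sub_zero]
    exact (smul_eq_zero.mp h).resolve_left two_ne_zero
  have hB : B = 0 := by
    rw [← mul_nonsing_inv_cancel_right L B hLnd, hBL, Matrix.zero_mul]
  have hQC : Q * Cᵀ = 0 := by simpa [hB] using h₁₂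
  refine ⟨hB, transpose_eq_zero.mp ?_⟩
  rw [← nonsing_inv_mul_cancel_left Q Cᵀ hQnd, hQC, Matrix.mul_zero]

variable {Q : Matrix n n ℂ} {L : Matrix o o ℂ}

theorem mem_ker_formActionL_fromBlocks_iff (hQ : Qᵀ = Q) (hQnd : IsUnit Q.det) (hL : Lᵀ = -L)
    (hLnd : IsUnit L.det) (X : Matrix (n ⊕ o) (n ⊕ o) ℂ) :
    X ∈ LinearMap.ker (formActionL (n ⊕ o) (fromBlocks Q 0 0 L)) ↔
      ∃ (X₁ : Matrix n n ℂ) (X₂ : Matrix o o ℂ),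
        X₁ * Q + Q * X₁ᵀ = 0 ∧ X₂ * L + L * X₂ᵀ = 0 ∧ X = fromBlocks X₁ 0 0 X₂ := by
  rw [← fromBlocks_toBlocks X, LinearMap.mem_ker, formActionL_fromBlocks, ← fromBlocks_zero,
    fromBlocks_inj]
  constructor
  · rintro ⟨h₁₁, h₁₂, h₂₁, h₂₂⟩
    obtain ⟨hB, hC⟩ := offDiag_eq_zero_of_symm_skew hQ hQnd hL hLnd h₁₂ h₂₁
    exact ⟨_, _, h₁₁, h₂₂, by rw [hB, hC]⟩
  · rintro ⟨X₁, X₂, h₁, h₂, hX⟩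
    obtain ⟨rfl, hB, hC, rfl⟩ := fromBlocks_inj.mp hX
    simp [formActionL_apply, hB, hC, h₁, h₂]

noncomputable def kerFormActionLFromBlocksEquiv (hQ : Qᵀ = Q) (hQnd : IsUnit Q.det)
    (hL : Lᵀ = -L) (hLnd : IsUnit L.det) :
    LinearMap.ker (formActionL (n ⊕ o) (fromBlocks Q 0 0 L)) ≃ₗ[ℂ]
      LinearMap.ker (formActionL n Q) × LinearMap.ker (formActionL o L) where
  toFun X :=
    have hX := (mem_ker_formActionL_fromBlocks_iff hQ hQnd hL hLnd X).mp X.2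
    (⟨X.1.toBlocks₁₁, by obtain ⟨_, _, h₁, -, hX⟩ := hX; rw [hX]; exact h₁⟩,
      ⟨X.1.toBlocks₂₂, by obtain ⟨_, _, -, h₂, hX⟩ := hX; rw [hX]; exact h₂⟩)
  invFun p := ⟨fromBlocks p.1 0 0 p.2,
    (mem_ker_formActionL_fromBlocks_iff hQ hQnd hL hLnd _).mpr ⟨_, _, p.1.2, p.2.2, rfl⟩⟩
  map_add' X Y := rfl
  map_smul' c X := rfl
  left_inv X := by
    obtain ⟨_, _, -, -, hX⟩ := (mem_ker_formActionL_fromBlocks_iff hQ hQnd hL hLnd _).mp X.2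
    ext1
    simp [hX]
  right_inv p := rfl

end Blocks

theorem dim_hB_caseB3_general (k : ℕ) (hk : 2 ≤ k)
    (Q : Matrix (Fin 2) (Fin 2) ℂ) (L : Matrix (Fin (k - 2)) (Fin (k - 2)) ℂ)
    (hQsymm : Qᵀ = Q) (hQnd : IsUnit Q.det)
    (hLskew : Lᵀ = -L) (hLnd : IsUnit L.det) :
    (∀ X : Matrix (Fin 2 ⊕ Fin (k - 2)) (Fin 2 ⊕ Fin (k - 2)) ℂ,
      X ∈ LinearMap.ker (formActionL (Fin 2 ⊕ Fin (k - 2)) (Matrix.fromBlocks Q 0 0 L)) ↔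
        ∃ (X₁ : Matrix (Fin 2) (Fin 2) ℂ) (X₂ : Matrix (Fin (k - 2)) (Fin (k - 2)) ℂ),
          X₁ * Q + Q * X₁ᵀ = 0 ∧ X₂ * L + L * X₂ᵀ = 0 ∧
          X = Matrix.fromBlocks X₁ 0 0 X₂) ∧
    Module.finrank ℂ (LinearMap.ker
        (formActionL (Fin 2 ⊕ Fin (k - 2)) (Matrix.fromBlocks Q 0 0 L)))
      = 1 + (k - 2) * (k - 1) / 2 ∧
    ((1 + (k - 2) * (k - 1) / 2 : ℕ) : ℤ) = (Nat.choose k 2 : ℤ) - k + 2 := by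
  have hdim : (k - 2) * (k - 1) / 2 = (k - 2 + 1).choose 2 := by
    rw [Nat.choose_two_right, Nat.add_sub_cancel, show k - 2 + 1 = k - 1 by omega, Nat.mul_comm]
  refine ⟨mem_ker_formActionL_fromBlocks_iff hQsymm hQnd hLskew hLnd, ?_, ?_⟩
  · rw [(kerFormActionLFromBlocksEquiv hQsymm hQnd hLskew hLnd).finrank_eq, Module.finrank_prod,
      finrank_ker_formActionL_of_symm hQsymm hQnd, finrank_ker_formActionL_of_skew hLskew hLnd,
      hdim, Fintype.card_fin, Fintype.card_fin, Nat.choose_self]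
  · obtain ⟨m, rfl⟩ := Nat.exists_eq_add_of_le' hk
    rw [hdim, Nat.add_sub_cancel, Nat.choose_succ_succ' (m + 1), Nat.choose_one_right]
    push_cast
    ring

/-- Case B3: for `B = Q|_E ⊕ Λ|_F` block-diagonal on `ℂ^k = E ⊕ F` with
`dim E = 2`, `Q|_E` symmetric nondegenerate and `Λ|_F` skew-symmetric
nondegenerate (`k` even), one has `h_B = so(Q|_E) ⊕ sp(Λ|_F)` and
`dim h_B = 1 + (k−2)(k−1)/2 = binom(k,2) − k + 2`. -/
theorem dim_hB_caseB3 (k : ℕ) (hk : 2 ≤ k) (heven : Even k)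
    (Q : Matrix (Fin 2) (Fin 2) ℂ) (L : Matrix (Fin (k - 2)) (Fin (k - 2)) ℂ)
    (hQsymm : Qᵀ = Q) (hQnd : IsUnit Q.det)
    (hLskew : Lᵀ = -L) (hLnd : IsUnit L.det) :
    (∀ X : Matrix (Fin 2 ⊕ Fin (k - 2)) (Fin 2 ⊕ Fin (k - 2)) ℂ,
      X ∈ LinearMap.ker (formActionL (Fin 2 ⊕ Fin (k - 2)) (Matrix.fromBlocks Q 0 0 L)) ↔
        ∃ (X₁ : Matrix (Fin 2) (Fin 2) ℂ) (X₂ : Matrix (Fin (k - 2)) (Fin (k - 2)) ℂ),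
          X₁ * Q + Q * X₁ᵀ = 0 ∧ X₂ * L + L * X₂ᵀ = 0 ∧
          X = Matrix.fromBlocks X₁ 0 0 X₂) ∧
    Module.finrank ℂ (LinearMap.ker
        (formActionL (Fin 2 ⊕ Fin (k - 2)) (Matrix.fromBlocks Q 0 0 L)))
      = 1 + (k - 2) * (k - 1) / 2 ∧
    ((1 + (k - 2) * (k - 1) / 2 : ℕ) : ℤ) = (Nat.choose k 2 : ℤ) - k + 2 :=
  dim_hB_caseB3_general k hk Q L hQsymm hQnd hLskew hLnd
end

section
/- For m ≥ 14 even, the tensor T_{max,even,m} = a₁⊗b₁⊗c₁ + Σ_{ρ=2}^m a₁⊗b_ρ⊗c_ρ + Σ_{ρ=2}^m a_ρ⊗b₁⊗c_ρ + [Σ_{ξ=2}^{m/2}(a_ξ⊗b_{ξ+m/2−1} − a_{ξ+m/2−1}⊗b_ξ)]⊗c_m satisfies dim G_{T_{max,even,m}} = m²/2 + 3m/2 − 2; in particular, the annihilator in gl_m ⊕ gl_m ⊕ gl_m of T_{max,even,m} has dimension m²/2 + 3m/2. -/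
/-!
`T_{max,even,m}` is the structure tensor of the unital associative algebra
`A = ℂ·1 ⊕ V ⊕ ℂ·t`, `V = ℂ^{m-2}`, in which `v * w = ω(v, w) • t` for the standard symplectic
form `ω` on `V`, and every other product of two elements of `V ⊕ ℂ·t` vanishes.

For the structure tensor of any unital associative algebra, the annihilator equations at the unit
express `X` and `Z` through `Y` and the first rows `a = X(1)`, `b = Y(1)`; what remains says that
`D = Y - R_b` is a derivation. Hence the annihilator is
`{(D + L_a, D + R_b, -(D + L_a + R_b)ᵀ) | a, b ∈ A, D ∈ Der A}` and has dimension
`2 dim A + dim Der A`.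

A derivation of our `A` kills `1`, maps `t` to a multiple `δ t`, and maps `v ∈ V` to
`B v + λ(v) t` with `λ` arbitrary and `B` in the conformal symplectic algebra
`B ω + ω Bᵀ = δ ω`. Writing `B = (δ/2) - S ω` identifies these `B` with pairs `(δ, S)`, `S`
symmetric, so `dim Der A = (m - 1) + (m - 2)(m - 1)/2` and the annihilator has dimension
`m²/2 + 3m/2`.
-/

open scoped BigOperators

/-- Leibniz-rule action; its kernel is the annihilator `g̃_T` of `T`, and
`dim G_T = dim g̃_T − 2`. -/
noncomputable def tensorActionL (a b c : ℕ) (T : Fin a → Fin b → Fin c → ℂ) :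
    (Matrix (Fin a) (Fin a) ℂ × Matrix (Fin b) (Fin b) ℂ × Matrix (Fin c) (Fin c) ℂ) →ₗ[ℂ]
      (Fin a → Fin b → Fin c → ℂ) where
  toFun p := fun i j k =>
    (∑ i', p.1 i i' * T i' j k) + (∑ j', p.2.1 j j' * T i j' k) +
      (∑ k', p.2.2 k k' * T i j k')
  map_add' p q := by
    funext i j k
    simp only [Prod.fst_add, Prod.snd_add, Matrix.add_apply, add_mul,
      Finset.sum_add_distrib, Pi.add_apply]
    ring
  map_smul' t p := by
    funext i j k
    simp only [Prod.smul_fst, Prod.smul_snd, Matrix.smul_apply, smul_eq_mul,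
      RingHom.id_apply, Pi.smul_apply, Finset.mul_sum, mul_add, mul_assoc]


/-- The tensor `T_{max,even,m}` (0-indexed coordinates). -/
noncomputable def TmaxEven (m : ℕ) (hm : 0 < m) : Fin m → Fin m → Fin m → ℂ :=
  fun i j k =>
    (if i = ⟨0, hm⟩ ∧ j = ⟨0, hm⟩ ∧ k = ⟨0, hm⟩ then 1 else 0)
    + (if i = ⟨0, hm⟩ ∧ j ≠ ⟨0, hm⟩ ∧ k = j then 1 else 0)
    + (if j = ⟨0, hm⟩ ∧ i ≠ ⟨0, hm⟩ ∧ k = i then 1 else 0)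
    + (if (k : ℕ) = m - 1 ∧ 1 ≤ (i : ℕ) ∧ (i : ℕ) ≤ m / 2 - 1 ∧
          (j : ℕ) = (i : ℕ) + m / 2 - 1 then 1 else 0)
    - (if (k : ℕ) = m - 1 ∧ 1 ≤ (j : ℕ) ∧ (j : ℕ) ≤ m / 2 - 1 ∧
          (i : ℕ) = (j : ℕ) + m / 2 - 1 then 1 else 0)

open Matrix

namespace StructureTensor

variable {m : ℕ}

/-- `T i j k` is the coefficient of `e k` in `e i * e j`, and `e o` is the unit. -/
structure IsUnitalAssoc (T : Fin m → Fin m → Fin m → ℂ) (o : Fin m) : Prop where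
  unit_mul : ∀ j k, T o j k = if j = k then 1 else 0
  mul_unit : ∀ i k, T i o k = if i = k then 1 else 0
  assoc : ∀ i j k p, ∑ l, T i j l * T l k p = ∑ l, T j k l * T i l p

variable (T : Fin m → Fin m → Fin m → ℂ)

lemma tensorActionL_apply (p : Matrix (Fin m) (Fin m) ℂ × Matrix (Fin m) (Fin m) ℂ ×
    Matrix (Fin m) (Fin m) ℂ) (i j k : Fin m) :
    tensorActionL m m m T p i j k =
      ∑ i', p.1 i i' * T i' j k + ∑ j', p.2.1 j j' * T i j' k + ∑ k', p.2.2 k k' * T i j k' :=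
  rfl

/-- Left multiplication by `a`, with the convention (used for every matrix below) that row `i`
is the image of `e i`. -/
def lmul : (Fin m → ℂ) →ₗ[ℂ] Matrix (Fin m) (Fin m) ℂ where
  toFun a := Matrix.of fun i k => ∑ l, a l * T l i k
  map_add' a b := by ext; simp [add_mul, Finset.sum_add_distrib]
  map_smul' c a := by ext; simp [Finset.mul_sum, mul_assoc]

def rmul : (Fin m → ℂ) →ₗ[ℂ] Matrix (Fin m) (Fin m) ℂ where
  toFun b := Matrix.of fun i k => ∑ l, b l * T i l k
  map_add' a b := by ext; simp [add_mul, Finset.sum_add_distrib]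
  map_smul' c a := by ext; simp [Finset.mul_sum, mul_assoc]

lemma lmul_apply (a : Fin m → ℂ) (i k : Fin m) : lmul T a i k = ∑ l, a l * T l i k := rfl

lemma rmul_apply (b : Fin m → ℂ) (i k : Fin m) : rmul T b i k = ∑ l, b l * T i l k := rfl

def diagTriple : Matrix (Fin m) (Fin m) ℂ →ₗ[ℂ]
    Matrix (Fin m) (Fin m) ℂ × Matrix (Fin m) (Fin m) ℂ × Matrix (Fin m) (Fin m) ℂ :=
  LinearMap.id.prod (LinearMap.id.prod (-(transposeLinearEquiv _ _ ℂ ℂ).toLinearMap))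

lemma diagTriple_apply (D : Matrix (Fin m) (Fin m) ℂ) : diagTriple D = (D, D, -Dᵀ) := rfl

/-- By `mem_derivations_iff`, these are the `D` with
`D (e i * e j) = D (e i) * e j + e i * D (e j)`. -/
noncomputable def derivations : Submodule ℂ (Matrix (Fin m) (Fin m) ℂ) :=
  (LinearMap.ker (tensorActionL m m m T)).comap diagTriple

lemma mem_derivations_iff (D : Matrix (Fin m) (Fin m) ℂ) :
    D ∈ derivations T ↔ ∀ i j k,
      ∑ i', D i i' * T i' j k + ∑ j', D j j' * T i j' k = ∑ k', D k' k * T i j k' := by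
  simp only [derivations, Submodule.mem_comap, LinearMap.mem_ker, funext_iff]
  refine forall₃_congr fun i j k => ?_
  simp [diagTriple_apply, tensorActionL_apply, add_eq_zero_iff_eq_neg]

def ofDerivation : ((Fin m → ℂ) × (Fin m → ℂ) × derivations T) →ₗ[ℂ]
    Matrix (Fin m) (Fin m) ℂ × Matrix (Fin m) (Fin m) ℂ × Matrix (Fin m) (Fin m) ℂ where
  toFun q := ((q.2.2 : Matrix (Fin m) (Fin m) ℂ) + lmul T q.1,
    (q.2.2 : Matrix (Fin m) (Fin m) ℂ) + rmul T q.2.1,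
    -((q.2.2 : Matrix (Fin m) (Fin m) ℂ) + lmul T q.1 + rmul T q.2.1)ᵀ)
  map_add' q r := by
    simp only [Prod.fst_add, Prod.snd_add, Submodule.coe_add, map_add, Matrix.transpose_add,
      Prod.mk_add_mk, Prod.mk.injEq]
    refine ⟨?_, ?_, ?_⟩ <;> abel
  map_smul' c q := by
    simp only [Prod.smul_fst, Prod.smul_snd, Submodule.coe_smul, map_smul, RingHom.id_apply,
      Prod.smul_mk, smul_add, Matrix.transpose_add, Matrix.transpose_smul, smul_neg]

variable {T} {o : Fin m}

namespace IsUnitalAssoc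

lemma lmul_apply_unit (hT : IsUnitalAssoc T o) (a : Fin m → ℂ) (k : Fin m) :
    lmul T a o k = a k := by
  simp [lmul_apply, hT.mul_unit]

lemma rmul_apply_unit (hT : IsUnitalAssoc T o) (b : Fin m → ℂ) (k : Fin m) :
    rmul T b o k = b k := by
  simp [rmul_apply, hT.unit_mul]

lemma derivation_apply_unit (hT : IsUnitalAssoc T o) {D : Matrix (Fin m) (Fin m) ℂ}
    (hD : D ∈ derivations T) (k : Fin m) : D o k = 0 := by
  simpa [hT.unit_mul, hT.mul_unit] using (mem_derivations_iff T D).1 hD o o k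

lemma lmulTriple_mem_ker (hT : IsUnitalAssoc T o) (a : Fin m → ℂ) :
    (lmul T a, 0, -(lmul T a)ᵀ) ∈ LinearMap.ker (tensorActionL m m m T) := by
  rw [LinearMap.mem_ker]
  funext i j k
  have key : ∀ l, ∑ i', a l * (T l i i' * T i' j k) = ∑ k', a l * (T l k' k * T i j k') := by
    intro l
    simp only [← Finset.mul_sum, hT.assoc l i j k, mul_comm (T i j _)]
  simp only [tensorActionL_apply, lmul_apply, Finset.sum_mul, Matrix.neg_apply,
    Matrix.transpose_apply, Matrix.zero_apply, zero_mul, Finset.sum_const_zero, add_zero,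
    neg_mul, Finset.sum_neg_distrib, mul_assoc, ← sub_eq_add_neg, Pi.zero_apply, sub_eq_zero]
  rw [Finset.sum_comm, Finset.sum_congr rfl fun l _ => key l, Finset.sum_comm]

lemma rmulTriple_mem_ker (hT : IsUnitalAssoc T o) (b : Fin m → ℂ) :
    (0, rmul T b, -(rmul T b)ᵀ) ∈ LinearMap.ker (tensorActionL m m m T) := by
  rw [LinearMap.mem_ker]
  funext i j k
  have key : ∀ l, ∑ j', b l * (T j l j' * T i j' k) = ∑ k', b l * (T k' l k * T i j k') := by
    intro l
    simp only [← Finset.mul_sum, ← hT.assoc i j l k, mul_comm (T i j _)]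
  simp only [tensorActionL_apply, rmul_apply, Finset.sum_mul, Matrix.neg_apply,
    Matrix.transpose_apply, Matrix.zero_apply, zero_mul, Finset.sum_const_zero, zero_add,
    neg_mul, Finset.sum_neg_distrib, mul_assoc, ← sub_eq_add_neg, Pi.zero_apply, sub_eq_zero]
  rw [Finset.sum_comm, Finset.sum_congr rfl fun l _ => key l, Finset.sum_comm]

lemma eq_of_mem_ker (hT : IsUnitalAssoc T o) {X Y Z : Matrix (Fin m) (Fin m) ℂ}
    (h : (X, Y, Z) ∈ LinearMap.ker (tensorActionL m m m T)) :
    X = Y + lmul T (X o) - rmul T (Y o) ∧ Z = -(Y + lmul T (X o))ᵀ := by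
  have hE : ∀ i j k, tensorActionL m m m T (X, Y, Z) i j k = 0 := fun i j k => by
    rw [LinearMap.mem_ker.1 h]; rfl
  have hZ : Z = -(Y + lmul T (X o))ᵀ := by
    ext k j
    have := hE o j k
    simp only [tensorActionL_apply, ← lmul_apply, hT.unit_mul, mul_ite, mul_one, mul_zero,
      Finset.sum_ite_eq, Finset.sum_ite_eq', Finset.mem_univ, if_true] at this
    simp only [Matrix.neg_apply, Matrix.transpose_apply, Matrix.add_apply]
    linear_combination this
  refine ⟨?_, hZ⟩
  ext i k
  have := hE i o k
  simp only [tensorActionL_apply, ← rmul_apply, hT.mul_unit, hZ, mul_ite, mul_one, mul_zero,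
    Finset.sum_ite_eq, Finset.sum_ite_eq', Finset.mem_univ, if_true, Matrix.neg_apply,
    Matrix.transpose_apply, Matrix.add_apply] at this
  rw [Matrix.sub_apply, Matrix.add_apply]
  linear_combination this

lemma ofDerivation_mem_ker (hT : IsUnitalAssoc T o)
    (q : (Fin m → ℂ) × (Fin m → ℂ) × derivations T) :
    ofDerivation T q ∈ LinearMap.ker (tensorActionL m m m T) := by
  have hsplit : ofDerivation T q = diagTriple (q.2.2 : Matrix (Fin m) (Fin m) ℂ)
      + (lmul T q.1, 0, -(lmul T q.1)ᵀ) + (0, rmul T q.2.1, -(rmul T q.2.1)ᵀ) := by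
    simp only [ofDerivation, diagTriple_apply, LinearMap.coe_mk, AddHom.coe_mk, Prod.mk_add_mk,
      Prod.mk.injEq, Matrix.transpose_add]
    refine ⟨?_, ?_, ?_⟩ <;> abel
  rw [hsplit]
  exact add_mem (add_mem q.2.2.2 (hT.lmulTriple_mem_ker _)) (hT.rmulTriple_mem_ker _)

lemma ofDerivation_injective (hT : IsUnitalAssoc T o) : Function.Injective (ofDerivation T) := by
  rw [← LinearMap.ker_eq_bot, LinearMap.ker_eq_bot']
  rintro ⟨a, b, D⟩ h
  simp only [ofDerivation, LinearMap.coe_mk, AddHom.coe_mk, Prod.mk_eq_zero] at h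
  have ha : a = 0 := funext fun k => by
    have := congrFun (congrFun h.1 o) k
    rwa [Matrix.add_apply, hT.derivation_apply_unit D.2, hT.lmul_apply_unit, zero_add] at this
  have hb : b = 0 := funext fun k => by
    have := congrFun (congrFun h.2.1 o) k
    rwa [Matrix.add_apply, hT.derivation_apply_unit D.2, hT.rmul_apply_unit, zero_add] at this
  subst ha hb
  simp only [map_zero, add_zero] at h
  simp [Subtype.ext_iff, h.1]

lemma sub_rmul_mem_derivations (hT : IsUnitalAssoc T o) {X Y Z : Matrix (Fin m) (Fin m) ℂ}
    (h : (X, Y, Z) ∈ LinearMap.ker (tensorActionL m m m T)) :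
    Y - rmul T (Y o) ∈ derivations T := by
  obtain ⟨hX, hZ⟩ := hT.eq_of_mem_ker h
  have hsplit : diagTriple (Y - rmul T (Y o)) = (X, Y, Z)
      - (lmul T (X o), 0, -(lmul T (X o))ᵀ) - (0, rmul T (Y o), -(rmul T (Y o))ᵀ) := by
    simp only [diagTriple_apply, Prod.mk_sub_mk, Prod.mk.injEq]
    refine ⟨?_, by abel, ?_⟩
    · nth_rw 1 [hX]
      abel
    · rw [hZ]
      simp only [Matrix.transpose_sub, Matrix.transpose_add, sub_neg_eq_add]
      abel
  show diagTriple _ ∈ LinearMap.ker _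
  rw [hsplit]
  exact sub_mem (sub_mem h (hT.lmulTriple_mem_ker _)) (hT.rmulTriple_mem_ker _)

lemma ofDerivation_sub_rmul (hT : IsUnitalAssoc T o) {X Y Z : Matrix (Fin m) (Fin m) ℂ}
    (h : (X, Y, Z) ∈ LinearMap.ker (tensorActionL m m m T)) :
    ofDerivation T (X o, Y o, ⟨_, hT.sub_rmul_mem_derivations h⟩) = (X, Y, Z) := by
  obtain ⟨hX, hZ⟩ := hT.eq_of_mem_ker h
  simp only [ofDerivation, LinearMap.coe_mk, AddHom.coe_mk, Prod.mk.injEq]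
  refine ⟨?_, sub_add_cancel _ _, ?_⟩
  · nth_rw 2 [hX]
    abel
  · rw [hZ, add_right_comm, sub_add_cancel]

theorem finrank_ker (hT : IsUnitalAssoc T o) :
    Module.finrank ℂ (LinearMap.ker (tensorActionL m m m T)) =
      m + m + Module.finrank ℂ (derivations T) := by
  let φ := (ofDerivation T).codRestrict _ hT.ofDerivation_mem_ker
  have hφ : Function.Bijective φ :=
    ⟨fun q r h => hT.ofDerivation_injective (congrArg Subtype.val h),
      fun ⟨_, h⟩ => ⟨_, Subtype.ext (hT.ofDerivation_sub_rmul h)⟩⟩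
  rw [← (LinearEquiv.ofBijective φ hφ).finrank_eq]
  simp [Module.finrank_prod, add_assoc]

end IsUnitalAssoc

end StructureTensor

open StructureTensor

namespace FormTensor

variable {n : ℕ}

def mid (a : Fin n) : Fin (n + 2) := a.castSucc.succ

@[simp] lemma val_mid (a : Fin n) : (mid a : ℕ) = a + 1 := rfl

@[simp] lemma mid_ne_zero (a : Fin n) : mid a ≠ 0 := Fin.succ_ne_zero _

@[simp] lemma mid_ne_last (a : Fin n) : mid a ≠ Fin.last (n + 1) := by
  simp only [ne_eq, Fin.ext_iff, val_mid, Fin.val_last]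
  omega

@[elab_as_elim]
lemma induction_zero_mid_last {motive : Fin (n + 2) → Prop} (zero : motive 0)
    (mid : ∀ a, motive (mid a)) (last : motive (Fin.last (n + 1))) (i : Fin (n + 2)) :
    motive i := by
  induction i using Fin.cases with
  | zero => exact zero
  | succ j =>
    induction j using Fin.lastCases with
    | last => exact last
    | cast a => exact mid a

lemma sum_zero_mid_last {M : Type*} [AddCommMonoid M] (f : Fin (n + 2) → M) :
    ∑ i, f i = f 0 + ∑ a, f (mid a) + f (Fin.last (n + 1)) := by
  rw [Fin.sum_univ_succ, Fin.sum_univ_castSucc, ← add_assoc]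
  rfl

def midCases {α : Sort*} (z : α) (f : Fin n → α) (l : α) : Fin (n + 2) → α :=
  Fin.cases z (Fin.lastCases l f)

@[simp] lemma midCases_zero {α : Sort*} (z : α) (f : Fin n → α) (l : α) :
    midCases z f l 0 = z := rfl

@[simp] lemma midCases_mid {α : Sort*} (z : α) (f : Fin n → α) (l : α) (a : Fin n) :
    midCases z f l (mid a) = f a := by
  simp [midCases, mid]

@[simp] lemma midCases_last {α : Sort*} (z : α) (f : Fin n → α) (l : α) :
    midCases z f l (Fin.last (n + 1)) = l := by
  simp [midCases, ← Fin.succ_last]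

section Form

variable {Ω : Matrix (Fin n) (Fin n) ℂ}

lemma eq_zero_of_forall_mul_eq_zero (hsq : Ω * Ω = -1) (c : Fin n) {x : ℂ}
    (h : ∀ a b, x * Ω a b = 0) : x = 0 := by
  have hcc := congrFun (congrFun hsq c) c
  simp only [Matrix.mul_apply, Matrix.neg_apply, Matrix.one_apply_eq] at hcc
  calc x = -(x * ∑ b, Ω c b * Ω b c) := by rw [hcc]; ring
    _ = 0 := by simp [Finset.mul_sum, ← mul_assoc, h]

lemma eq_zero_of_mul_add_mul_transpose_eq_zero (hanti : Ωᵀ = -Ω) (hsq : Ω * Ω = -1)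
    {A : Matrix (Fin n) (Fin n) ℂ} (h : A * Ω + Ω * Aᵀ = 0)
    (hskew : ∀ a b, (A * Ω) a b + (A * Ω) b a = 0) : A = 0 := by
  have hW : A * Ω = 0 := by
    have hsymm : (A * Ω)ᵀ = A * Ω := by
      rw [Matrix.transpose_mul, hanti, Matrix.neg_mul, ← add_eq_zero_iff_neg_eq.1 h, neg_neg]
    ext a b
    have hba := congrFun (congrFun hsymm a) b
    rw [Matrix.transpose_apply] at hba
    rw [Matrix.zero_apply]
    linear_combination (hskew a b - hba) / 2
  calc A = -(A * Ω * Ω) := by rw [Matrix.mul_assoc, hsq]; simp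
    _ = 0 := by rw [hW]; simp

variable (Ω) in
/-- For symmetric `S`, these are the solutions `A` of `A * Ω + Ω * Aᵀ = δ • Ω`. -/
noncomputable def cspOf (δ : ℂ) (S : Matrix (Fin n) (Fin n) ℂ) : Matrix (Fin n) (Fin n) ℂ :=
  (δ / 2) • 1 - S * Ω

lemma cspOf_mul (hsq : Ω * Ω = -1) (δ : ℂ) (S : Matrix (Fin n) (Fin n) ℂ) :
    cspOf Ω δ S * Ω = (δ / 2) • Ω + S := by
  simp [cspOf, Matrix.sub_mul, Matrix.mul_assoc, hsq]

lemma cspOf_mul_add (hanti : Ωᵀ = -Ω) (hsq : Ω * Ω = -1) (δ : ℂ) {S : Matrix (Fin n) (Fin n) ℂ}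
    (hS : Sᵀ = S) : cspOf Ω δ S * Ω + Ω * (cspOf Ω δ S)ᵀ = δ • Ω := by
  rw [cspOf_mul hsq]
  simp only [cspOf, Matrix.transpose_sub, Matrix.transpose_smul, Matrix.transpose_one,
    Matrix.transpose_mul, hanti, hS, Matrix.mul_sub, Matrix.mul_smul, Matrix.mul_one,
    Matrix.mul_neg, ← Matrix.mul_assoc, hsq, Matrix.neg_mul, Matrix.one_mul]
  module

end Form

def symSum : Matrix (Fin n) (Fin n) ℂ →ₗ[ℂ] (Sym2 (Fin n) → ℂ) where
  toFun W := Sym2.lift ⟨fun a b => W a b + W b a, fun _ _ => add_comm _ _⟩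
  map_add' W V := by
    funext z
    induction z using Sym2.ind
    simp only [Sym2.lift_mk, Matrix.add_apply, Pi.add_apply]
    ring
  map_smul' c W := by
    funext z
    induction z using Sym2.ind
    simp only [Sym2.lift_mk, Matrix.smul_apply, smul_eq_mul, RingHom.id_apply, Pi.smul_apply]
    ring

@[simp] lemma symSum_mk (W : Matrix (Fin n) (Fin n) ℂ) (a b : Fin n) :
    symSum W s(a, b) = W a b + W b a := rfl

def extendForm (Ω : Matrix (Fin n) (Fin n) ℂ) : Matrix (Fin (n + 2)) (Fin (n + 2)) ℂ :=
  Matrix.of (midCases 0 (fun a => midCases 0 (Ω a) 0) 0)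

/-- The structure tensor of the algebra on `ℂ^(n+2)` with unit `e 0` in which
`e (mid a) * e (mid b) = Ω a b • e (last)` and all other products of non-units vanish. -/
def formTensor (Ω : Matrix (Fin n) (Fin n) ℂ) (i j k : Fin (n + 2)) : ℂ :=
  if i = 0 then (if j = k then 1 else 0)
  else if j = 0 then (if i = k then 1 else 0)
  else if k = Fin.last (n + 1) then extendForm Ω i j else 0

variable (Ω : Matrix (Fin n) (Fin n) ℂ)

@[simp] lemma extendForm_zero_left (j) : extendForm Ω 0 j = 0 := rfl

@[simp] lemma extendForm_last_left (j) : extendForm Ω (Fin.last (n + 1)) j = 0 := by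
  simp [extendForm]

@[simp] lemma extendForm_zero_right (i) : extendForm Ω i 0 = 0 := by
  induction i using induction_zero_mid_last <;> simp [extendForm]

@[simp] lemma extendForm_last_right (i) : extendForm Ω i (Fin.last (n + 1)) = 0 := by
  induction i using induction_zero_mid_last <;> simp [extendForm]

@[simp] lemma extendForm_mid_mid (a b) : extendForm Ω (mid a) (mid b) = Ω a b := by
  simp [extendForm]

lemma formTensor_zero_left (j k) : formTensor Ω 0 j k = if j = k then 1 else 0 := rfl

lemma formTensor_zero_right (i k) : formTensor Ω i 0 k = if i = k then 1 else 0 := by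
  by_cases hi : i = 0 <;> simp [formTensor, hi]

lemma formTensor_of_ne_zero {i j : Fin (n + 2)} (hi : i ≠ 0) (hj : j ≠ 0) (k) :
    formTensor Ω i j k = if k = Fin.last (n + 1) then extendForm Ω i j else 0 := by
  simp [formTensor, hi, hj]

theorem isUnitalAssoc_formTensor : IsUnitalAssoc (formTensor Ω) 0 where
  unit_mul := formTensor_zero_left Ω
  mul_unit := formTensor_zero_right Ω
  assoc i j k p := by
    by_cases hi : i = 0
    · simp [hi, formTensor_zero_left]
    by_cases hj : j = 0
    · simp [hj, formTensor_zero_left, formTensor_zero_right]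
    by_cases hk : k = 0
    · simp [hk, formTensor_zero_right]
    simp [formTensor_of_ne_zero Ω hi hj, formTensor_of_ne_zero Ω hj hk, ite_mul,
      formTensor_of_ne_zero Ω (Fin.last_pos.ne') hk, formTensor_of_ne_zero Ω hi (Fin.last_pos.ne')]

variable {Ω}

lemma extendForm_diag (hanti : Ωᵀ = -Ω) (i : Fin (n + 2)) : extendForm Ω i i = 0 := by
  induction i using induction_zero_mid_last with
  | mid a =>
    have := congrFun (congrFun hanti a) a
    simp only [Matrix.transpose_apply, Matrix.neg_apply] at this
    simpa using CharZero.eq_neg_self_iff.1 this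
  | _ => simp

lemma mul_extendForm_mid_mid (D : Matrix (Fin (n + 2)) (Fin (n + 2)) ℂ) (a b : Fin n) :
    (D * extendForm Ω) (mid a) (mid b) = (D.submatrix mid mid * Ω) a b := by
  simp [Matrix.mul_apply, sum_zero_mid_last]

lemma mul_transpose_extendForm_mid_mid (D : Matrix (Fin (n + 2)) (Fin (n + 2)) ℂ) (a b : Fin n) :
    (D * (extendForm Ω)ᵀ) (mid b) (mid a) = (Ω * (D.submatrix mid mid)ᵀ) a b := by
  simp [Matrix.mul_apply, sum_zero_mid_last, mul_comm]

lemma sum_mul_formTensor₁ (D : Matrix (Fin (n + 2)) (Fin (n + 2)) ℂ) (i : Fin (n + 2))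
    {j : Fin (n + 2)} (hj : j ≠ 0) (k : Fin (n + 2)) :
    ∑ i', D i i' * formTensor Ω i' j k =
      (if j = k then D i 0 else 0) +
        if k = Fin.last (n + 1) then (D * extendForm Ω) i j else 0 := by
  have h : ∀ i', D i i' * formTensor Ω i' j k =
      (if i' = 0 then (if j = k then D i 0 else 0) else 0) +
        if k = Fin.last (n + 1) then D i i' * extendForm Ω i' j else 0 := by
    intro i'
    by_cases hi' : i' = 0
    · simp [hi', formTensor_zero_left]
    · simp [hi', formTensor_of_ne_zero Ω hi' hj, mul_ite]
  simp [h, Finset.sum_add_distrib, Matrix.mul_apply]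

lemma sum_mul_formTensor₂ (D : Matrix (Fin (n + 2)) (Fin (n + 2)) ℂ) {i : Fin (n + 2)}
    (hi : i ≠ 0) (j k : Fin (n + 2)) :
    ∑ j', D j j' * formTensor Ω i j' k =
      (if i = k then D j 0 else 0) +
        if k = Fin.last (n + 1) then (D * (extendForm Ω)ᵀ) j i else 0 := by
  have h : ∀ j', D j j' * formTensor Ω i j' k =
      (if j' = 0 then (if i = k then D j 0 else 0) else 0) +
        if k = Fin.last (n + 1) then D j j' * extendForm Ω i j' else 0 := by
    intro j'
    by_cases hj' : j' = 0
    · simp [hj', formTensor_zero_right]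
    · simp [hj', formTensor_of_ne_zero Ω hi hj', mul_ite]
  simp [h, Finset.sum_add_distrib, Matrix.mul_apply]

lemma sum_mul_formTensor₃ (D : Matrix (Fin (n + 2)) (Fin (n + 2)) ℂ) {i j : Fin (n + 2)}
    (hi : i ≠ 0) (hj : j ≠ 0) (k : Fin (n + 2)) :
    ∑ k', D k' k * formTensor Ω i j k' = D (Fin.last (n + 1)) k * extendForm Ω i j := by
  simp [formTensor_of_ne_zero Ω hi hj, mul_ite]

lemma leibniz_formTensor_iff_of_ne_zero (D : Matrix (Fin (n + 2)) (Fin (n + 2)) ℂ)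
    {i j : Fin (n + 2)} (hi : i ≠ 0) (hj : j ≠ 0) (k : Fin (n + 2)) :
    (∑ i', D i i' * formTensor Ω i' j k + ∑ j', D j j' * formTensor Ω i j' k =
      ∑ k', D k' k * formTensor Ω i j k') ↔
    (if j = k then D i 0 else 0) + (if i = k then D j 0 else 0) +
      (if k = Fin.last (n + 1) then (D * extendForm Ω) i j + (D * (extendForm Ω)ᵀ) j i
        else 0) =
      D (Fin.last (n + 1)) k * extendForm Ω i j := by
  rw [sum_mul_formTensor₁ D i hj, sum_mul_formTensor₂ D hi, sum_mul_formTensor₃ D hi hj]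
  split_ifs <;> ring_nf

lemma derivation_apply_zero_right (hanti : Ωᵀ = -Ω) {D : Matrix (Fin (n + 2)) (Fin (n + 2)) ℂ}
    (hD : D ∈ derivations (formTensor Ω)) (i : Fin (n + 2)) : D i 0 = 0 := by
  by_cases hi : i = 0
  · subst hi
    exact (isUnitalAssoc_formTensor Ω).derivation_apply_unit hD 0
  have hii := (leibniz_formTensor_iff_of_ne_zero D hi hi i).1 ((mem_derivations_iff _ D).1 hD i i i)
  rw [extendForm_diag hanti, mul_zero] at hii
  by_cases hl : i = Fin.last (n + 1)
  · subst hl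
    simpa [Matrix.mul_apply] using hii
  · simpa [hl] using hii

lemma derivation_apply_last_left (hanti : Ωᵀ = -Ω) (hsq : Ω * Ω = -1)
    {D : Matrix (Fin (n + 2)) (Fin (n + 2)) ℂ} (hD : D ∈ derivations (formTensor Ω))
    {k : Fin (n + 2)} (hk : k ≠ Fin.last (n + 1)) : D (Fin.last (n + 1)) k = 0 := by
  induction k using induction_zero_mid_last with
  | zero => exact derivation_apply_zero_right hanti hD _
  | mid c =>
    refine eq_zero_of_forall_mul_eq_zero hsq c fun a b => ?_
    have := (leibniz_formTensor_iff_of_ne_zero D (mid_ne_zero a) (mid_ne_zero b) (mid c)).1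
      ((mem_derivations_iff _ D).1 hD _ _ _)
    simpa [derivation_apply_zero_right hanti hD] using this.symm
  | last => exact absurd rfl hk

lemma derivation_submatrix_mid {D : Matrix (Fin (n + 2)) (Fin (n + 2)) ℂ}
    (hD : D ∈ derivations (formTensor Ω)) :
    D.submatrix mid mid * Ω + Ω * (D.submatrix mid mid)ᵀ =
      D (Fin.last (n + 1)) (Fin.last (n + 1)) • Ω := by
  ext a b
  have := (leibniz_formTensor_iff_of_ne_zero D (mid_ne_zero a) (mid_ne_zero b) _).1
    ((mem_derivations_iff _ D).1 hD _ _ (Fin.last _))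
  simpa [mul_extendForm_mid_mid, mul_transpose_extendForm_mid_mid] using this

lemma mem_derivations_formTensor {D : Matrix (Fin (n + 2)) (Fin (n + 2)) ℂ}
    (hrow : ∀ k, D 0 k = 0) (hcol : ∀ i, D i 0 = 0)
    (hlast : ∀ k, k ≠ Fin.last (n + 1) → D (Fin.last (n + 1)) k = 0)
    (hmid : D.submatrix mid mid * Ω + Ω * (D.submatrix mid mid)ᵀ =
      D (Fin.last (n + 1)) (Fin.last (n + 1)) • Ω) :
    D ∈ derivations (formTensor Ω) := by
  refine (mem_derivations_iff _ D).2 fun i j k => ?_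
  by_cases hi : i = 0
  · subst hi
    simp [formTensor_zero_left, hrow]
  by_cases hj : j = 0
  · subst hj
    simp [formTensor_zero_right, hrow]
  rw [leibniz_formTensor_iff_of_ne_zero D hi hj]
  simp only [hcol, ite_self, zero_add]
  by_cases hk : k = Fin.last (n + 1)
  · subst hk
    rw [if_pos rfl]
    induction i using induction_zero_mid_last with
    | zero => exact absurd rfl hi
    | last => simp [Matrix.mul_apply, sum_zero_mid_last, hlast]
    | mid a =>
      induction j using induction_zero_mid_last with
      | zero => exact absurd rfl hj
      | last => simp [Matrix.mul_apply, sum_zero_mid_last, hlast]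
      | mid b =>
        rw [mul_extendForm_mid_mid, mul_transpose_extendForm_mid_mid, extendForm_mid_mid,
          ← Matrix.add_apply, hmid, Matrix.smul_apply, smul_eq_mul]
  · rw [if_neg hk, hlast k hk, zero_mul]

variable (Ω) in
def derivationParams :
    derivations (formTensor Ω) →ₗ[ℂ] (Fin (n + 1) → ℂ) × (Sym2 (Fin n) → ℂ) where
  toFun D := (fun s => (D : Matrix _ _ ℂ) s.succ (Fin.last (n + 1)),
    symSum ((D : Matrix _ _ ℂ).submatrix mid mid * Ω))
  map_add' D E := by
    refine Prod.ext rfl ?_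
    rw [Prod.snd_add, ← map_add, ← Matrix.add_mul]
    rfl
  map_smul' c D := by
    refine Prod.ext rfl ?_
    rw [Prod.smul_snd, RingHom.id_apply, ← map_smul, ← Matrix.smul_mul]
    rfl

variable (Ω) in
/-- Inverse of `derivationParams`; the factor `1 / 2` undoes the doubling in `symSum`. -/
noncomputable def derivationOfParams (γ : Fin (n + 1) → ℂ) (s : Sym2 (Fin n) → ℂ) :
    Matrix (Fin (n + 2)) (Fin (n + 2)) ℂ :=
  Matrix.of <| midCases 0
    (fun a => midCases 0 (cspOf Ω (γ (Fin.last n)) (Matrix.of fun a b => s s(a, b) / 2) a)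
      (γ a.castSucc))
    (midCases 0 0 (γ (Fin.last n)))

lemma derivationParams_injective (hanti : Ωᵀ = -Ω) (hsq : Ω * Ω = -1) :
    Function.Injective (derivationParams Ω) := by
  rw [← LinearMap.ker_eq_bot, LinearMap.ker_eq_bot']
  rintro ⟨D, hD⟩ h
  simp only [derivationParams, LinearMap.coe_mk, AddHom.coe_mk, Prod.mk_eq_zero, funext_iff,
    Pi.zero_apply] at h
  obtain ⟨hγ, hsymSum⟩ := h
  have hδ : D (Fin.last (n + 1)) (Fin.last (n + 1)) = 0 := by simpa using hγ (Fin.last n)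
  have hA : D.submatrix mid mid = 0 := by
    refine eq_zero_of_mul_add_mul_transpose_eq_zero hanti hsq ?_ fun a b => ?_
    · rw [derivation_submatrix_mid hD, hδ, zero_smul]
    · simpa using hsymSum s(a, b)
  rw [Submodule.mk_eq_zero]
  ext i k
  induction i using induction_zero_mid_last with
  | zero => exact (isUnitalAssoc_formTensor Ω).derivation_apply_unit hD k
  | mid a =>
    induction k using induction_zero_mid_last with
    | zero => exact derivation_apply_zero_right hanti hD _
    | mid b => exact congrFun (congrFun hA a) b
    | last => simpa [mid] using hγ a.castSucc
  | last =>
    by_cases hk : k = Fin.last (n + 1)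
    · rw [hk, hδ]
      rfl
    · exact derivation_apply_last_left hanti hsq hD hk

lemma submatrix_derivationOfParams (γ : Fin (n + 1) → ℂ) (s : Sym2 (Fin n) → ℂ) :
    (derivationOfParams Ω γ s).submatrix mid mid =
      cspOf Ω (γ (Fin.last n)) (Matrix.of fun a b => s s(a, b) / 2) := by
  ext a b
  simp [derivationOfParams]

lemma derivationOfParams_mem (hanti : Ωᵀ = -Ω) (hsq : Ω * Ω = -1) (γ : Fin (n + 1) → ℂ)
    (s : Sym2 (Fin n) → ℂ) : derivationOfParams Ω γ s ∈ derivations (formTensor Ω) := by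
  refine mem_derivations_formTensor (fun k => rfl) (fun i => ?_) (fun k hk => ?_) ?_
  · induction i using induction_zero_mid_last <;> simp [derivationOfParams]
  · induction k using induction_zero_mid_last
    · simp [derivationOfParams]
    · simp [derivationOfParams]
    · exact absurd rfl hk
  · rw [submatrix_derivationOfParams]
    convert cspOf_mul_add hanti hsq _ ?_
    · simp [derivationOfParams]
    · ext a b
      simp [Sym2.eq_swap]

lemma derivationParams_derivationOfParams (hanti : Ωᵀ = -Ω) (hsq : Ω * Ω = -1)
    (γ : Fin (n + 1) → ℂ) (s : Sym2 (Fin n) → ℂ) :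
    derivationParams Ω ⟨_, derivationOfParams_mem hanti hsq γ s⟩ = (γ, s) := by
  refine Prod.ext (funext fun t => ?_) (funext fun z => ?_)
  · induction t using Fin.lastCases with
    | last => simp [derivationParams, derivationOfParams]
    | cast a =>
      show derivationOfParams Ω γ s (mid a) (Fin.last (n + 1)) = _
      simp [derivationOfParams]
  · induction z using Sym2.ind with
    | _ a b =>
      have hba := congrFun (congrFun hanti a) b
      simp only [Matrix.transpose_apply, Matrix.neg_apply] at hba
      simp only [derivationParams, LinearMap.coe_mk, AddHom.coe_mk,
        submatrix_derivationOfParams, cspOf_mul hsq, symSum_mk, Matrix.add_apply,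
        Matrix.smul_apply, Matrix.of_apply, smul_eq_mul, hba, Sym2.eq_swap]
      ring

theorem finrank_derivations_formTensor (hanti : Ωᵀ = -Ω) (hsq : Ω * Ω = -1) :
    Module.finrank ℂ (derivations (formTensor Ω)) = n + 1 + (n + 1).choose 2 := by
  have hsurj : Function.Surjective (derivationParams Ω) := fun ⟨γ, s⟩ =>
    ⟨_, derivationParams_derivationOfParams hanti hsq γ s⟩
  rw [(LinearEquiv.ofBijective _ ⟨derivationParams_injective hanti hsq, hsurj⟩).finrank_eq]
  simp [Module.finrank_prod, Sym2.card]

theorem finrank_ker_formTensor (hanti : Ωᵀ = -Ω) (hsq : Ω * Ω = -1) :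
    Module.finrank ℂ (LinearMap.ker (tensorActionL (n + 2) (n + 2) (n + 2) (formTensor Ω))) =
      (n + 2) + (n + 2) + (n + 1 + (n + 1).choose 2) := by
  rw [(isUnitalAssoc_formTensor Ω).finrank_ker, finrank_derivations_formTensor hanti hsq]

variable (r : ℕ)

noncomputable def symplecticForm : Matrix (Fin (r + r)) (Fin (r + r)) ℂ :=
  Matrix.reindexAlgEquiv ℂ ℂ finSumFinEquiv (-Matrix.J (Fin r) ℂ)

lemma symplecticForm_transpose : (symplecticForm r)ᵀ = -symplecticForm r := by
  rw [symplecticForm, Matrix.coe_reindexAlgEquiv, Matrix.transpose_reindex, Matrix.transpose_neg,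
    Matrix.J_transpose]
  ext a b
  simp

lemma symplecticForm_mul_self : symplecticForm r * symplecticForm r = -1 := by
  rw [symplecticForm, ← map_mul, neg_mul_neg, Matrix.J_squared, map_neg, map_one]

lemma symplecticForm_apply (a b : Fin (r + r)) :
    symplecticForm r a b = (if (a : ℕ) < r ∧ (b : ℕ) = a + r then 1 else 0) -
      (if (b : ℕ) < r ∧ (a : ℕ) = b + r then 1 else 0) := by
  induction a using Fin.addCases <;> induction b using Fin.addCases <;>
    simp only [symplecticForm, Matrix.coe_reindexAlgEquiv, Matrix.reindex_apply,
      Matrix.submatrix_apply, finSumFinEquiv_symm_apply_castAdd, finSumFinEquiv_symm_apply_natAdd,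
      Matrix.J, Matrix.neg_apply, Matrix.fromBlocks_apply₁₁, Matrix.fromBlocks_apply₁₂,
      Matrix.fromBlocks_apply₂₁, Matrix.fromBlocks_apply₂₂, Matrix.one_apply, Matrix.zero_apply,
      Fin.val_castAdd, Fin.val_natAdd, Fin.ext_iff] <;>
    split_ifs <;> first | omega | norm_num

lemma extendForm_symplecticForm_apply (i j : Fin (r + r + 2)) :
    extendForm (symplecticForm r) i j =
      (if 1 ≤ (i : ℕ) ∧ (i : ℕ) ≤ r ∧ (j : ℕ) = i + r then 1 else 0) -
        (if 1 ≤ (j : ℕ) ∧ (j : ℕ) ≤ r ∧ (i : ℕ) = j + r then 1 else 0) := by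
  induction i using induction_zero_mid_last with
  | mid a =>
    induction j using induction_zero_mid_last with
    | mid b =>
      rw [extendForm_mid_mid, symplecticForm_apply, val_mid, val_mid]
      congr 1 <;> exact if_congr (by omega) rfl rfl
    | _ =>
      rw [if_neg (by simp only [val_mid, Fin.val_zero, Fin.val_last]; omega),
        if_neg (by simp only [val_mid, Fin.val_zero, Fin.val_last]; omega)]
      simp
  | _ =>
    rw [if_neg (by simp only [Fin.val_zero, Fin.val_last]; omega),
      if_neg (by simp only [Fin.val_zero, Fin.val_last]; omega)]
    simp

theorem TmaxEven_eq_formTensor (h : 0 < r + r + 2) :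
    TmaxEven (r + r + 2) h = formTensor (symplecticForm r) := by
  funext i j k
  simp only [TmaxEven, formTensor, extendForm_symplecticForm_apply, Fin.ext_iff, ne_eq,
    Fin.val_zero, Fin.val_last]
  split_ifs <;> first | omega | norm_num

end FormTensor

/-- For `m ≥ 14` even, `dim G_{T_{max,even,m}} = m²/2 + 3m/2 − 2`; equivalently
the annihilator of `T_{max,even,m}` in `gl_m ⊕ gl_m ⊕ gl_m` has dimension
`m²/2 + 3m/2`. -/
theorem dim_annihilator_TmaxEven (m : ℕ) (hm : 14 ≤ m) (heven : Even m) :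
    Module.finrank ℂ (LinearMap.ker (tensorActionL m m m (TmaxEven m (by omega))))
      = m ^ 2 / 2 + 3 * m / 2 ∧
    Module.finrank ℂ (LinearMap.ker (tensorActionL m m m (TmaxEven m (by omega)))) - 2
      = m ^ 2 / 2 + 3 * m / 2 - 2 := by
  obtain ⟨r, rfl⟩ : ∃ r, m = r + r + 2 := by
    obtain ⟨k, hk⟩ := heven
    exact ⟨k - 1, by omega⟩
  have hdim :
      Module.finrank ℂ (LinearMap.ker (tensorActionL _ _ _ (TmaxEven (r + r + 2) (by omega)))) =
        (r + r + 2) ^ 2 / 2 + 3 * (r + r + 2) / 2 := by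
    rw [FormTensor.TmaxEven_eq_formTensor, FormTensor.finrank_ker_formTensor
      (FormTensor.symplecticForm_transpose r) (FormTensor.symplecticForm_mul_self r),
      Nat.choose_two_right, Nat.add_sub_cancel,
      Nat.div_eq_of_eq_mul_left two_pos (show (r + r + 1) * (r + r) = (r + r + 1) * r * 2 by ring),
      Nat.div_eq_of_eq_mul_left two_pos (show (r + r + 2) ^ 2 = 2 * (r + 1) ^ 2 * 2 by ring),
      Nat.div_eq_of_eq_mul_left two_pos (show 3 * (r + r + 2) = 3 * (r + 1) * 2 by ring)]
    ring
  exact ⟨hdim, by rw [hdim]⟩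
end

section
/- For m ≥ 3, the big Coppersmith–Winograd tensor T_{CW,m−2} = a₁⊗b₁⊗c₁ + Σ_{ρ=2}^m a₁⊗b_ρ⊗c_ρ + Σ_{ρ=2}^m a_ρ⊗b₁⊗c_ρ + Σ_{s=2}^{m−1} a_s⊗b_s⊗c_m has symmetry group of dimension dim G_{T_{CW,m−2}} = (m² + m)/2; equivalently, its annihilator in gl_m⊕gl_m⊕gl_m has dimension (m² + m)/2 + 2. -/
set_option maxHeartbeats 1600000


open scoped BigOperators

/-- The big Coppersmith–Winograd tensor `T_{CW,m−2}` (0-indexed coordinates). -/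
noncomputable def TbigCW (m : ℕ) (hm : 0 < m) : Fin m → Fin m → Fin m → ℂ :=
  fun i j k =>
    (if i = ⟨0, hm⟩ ∧ j = ⟨0, hm⟩ ∧ k = ⟨0, hm⟩ then 1 else 0)
    + (if i = ⟨0, hm⟩ ∧ j ≠ ⟨0, hm⟩ ∧ k = j then 1 else 0)
    + (if j = ⟨0, hm⟩ ∧ i ≠ ⟨0, hm⟩ ∧ k = i then 1 else 0)
    + (if (k : ℕ) = m - 1 ∧ i = j ∧ 1 ≤ (i : ℕ) ∧ (i : ℕ) ≤ m - 2 then 1 else 0)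

namespace CWp

lemma pos3 {m : ℕ} (hm : 3 ≤ m) : 0 < m := by omega

variable (m : ℕ)

def z (hm : 3 ≤ m) : Fin m := ⟨0, pos3 hm⟩
def e (hm : 3 ≤ m) : Fin m := ⟨m - 1, by omega⟩
def Mid (hm : 3 ≤ m) (x : Fin m) : Prop := x ≠ z m hm ∧ x ≠ e m hm

instance (hm : 3 ≤ m) : DecidablePred (Mid m hm) := fun _ => instDecidableAnd

variable {m}

lemma z_ne_e (hm : 3 ≤ m) : z m hm ≠ e m hm := by
  simp [z, e, Fin.ext_iff]; omega

lemma mid_iff (hm : 3 ≤ m) (x : Fin m) :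
    (1 ≤ (x : ℕ) ∧ (x : ℕ) ≤ m - 2) ↔ Mid m hm x := by
  have := x.isLt
  simp [Mid, z, e, Fin.ext_iff]; omega

lemma eq_e_iff (hm : 3 ≤ m) (x : Fin m) : (x : ℕ) = m - 1 ↔ x = e m hm := by
  simp [e, Fin.ext_iff]

lemma collapse {f : Fin m → ℂ} {P : Fin m → Prop} [DecidablePred P] {c : Fin m}
    (h : ∀ x, P x → x = c) : (∑ x, f x * if P x then 1 else 0) = if P c then f c else 0 := by
  rw [Finset.sum_eq_single c]
  · by_cases hc : P c <;> simp [hc]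
  · intro b _ hb
    rw [if_neg (fun hP => hb (h b hP)), mul_zero]
  · simp

lemma sumA (hm : 3 ≤ m) (A : Matrix (Fin m) (Fin m) ℂ) (i j k : Fin m) :
    (∑ i', A i i' * TbigCW m (pos3 hm) i' j k) =
      (if j = z m hm ∧ k = z m hm then A i (z m hm) else 0)
        + (if j ≠ z m hm ∧ k = j then A i (z m hm) else 0)
        + (if j = z m hm ∧ k ≠ z m hm then A i k else 0)
        + (if k = e m hm ∧ Mid m hm j then A i j else 0) := by
  have hz : (⟨0, by omega⟩ : Fin m) = z m hm := rfl
  simp only [TbigCW, mul_add, Finset.sum_add_distrib, hz]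
  rw [collapse (c := z m hm) (fun x hx => hx.1),
      collapse (c := z m hm) (fun x hx => hx.1),
      collapse (c := k) (fun x (hx : j = z m hm ∧ x ≠ z m hm ∧ k = x) => hx.2.2.symm),
      collapse (c := j) (fun x (hx : (k:ℕ) = m - 1 ∧ x = j ∧ _) => hx.2.1)]
  rw [if_congr (show (z m hm = z m hm ∧ j = z m hm ∧ k = z m hm) ↔ (j = z m hm ∧ k = z m hm)
        by tauto) rfl rfl,
      if_congr (show (z m hm = z m hm ∧ j ≠ z m hm ∧ k = j) ↔ (j ≠ z m hm ∧ k = j)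
        by tauto) rfl rfl,
      if_congr (show (j = z m hm ∧ k ≠ z m hm ∧ k = k) ↔ (j = z m hm ∧ k ≠ z m hm)
        by tauto) rfl rfl,
      if_congr (show ((k:ℕ) = m - 1 ∧ j = j ∧ 1 ≤ (j:ℕ) ∧ (j:ℕ) ≤ m - 2)
          ↔ (k = e m hm ∧ Mid m hm j) by rw [← eq_e_iff hm, ← mid_iff hm]; tauto) rfl rfl]

lemma sumB (hm : 3 ≤ m) (B : Matrix (Fin m) (Fin m) ℂ) (i j k : Fin m) :
    (∑ j', B j j' * TbigCW m (pos3 hm) i j' k) =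
      (if i = z m hm ∧ k = z m hm then B j (z m hm) else 0)
        + (if i ≠ z m hm ∧ k = i then B j (z m hm) else 0)
        + (if i = z m hm ∧ k ≠ z m hm then B j k else 0)
        + (if k = e m hm ∧ Mid m hm i then B j i else 0) := by
  have hz : (⟨0, by omega⟩ : Fin m) = z m hm := rfl
  simp only [TbigCW, mul_add, Finset.sum_add_distrib, hz]
  rw [collapse (c := z m hm) (fun x hx => hx.2.1),
      collapse (c := k) (fun x (hx : i = z m hm ∧ x ≠ z m hm ∧ k = x) => hx.2.2.symm),
      collapse (c := z m hm) (fun x (hx : x = z m hm ∧ _) => hx.1),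
      collapse (c := i) (fun x (hx : (k:ℕ) = m - 1 ∧ i = x ∧ _) => hx.2.1.symm)]
  rw [if_congr (show (i = z m hm ∧ z m hm = z m hm ∧ k = z m hm) ↔ (i = z m hm ∧ k = z m hm)
        by tauto) rfl rfl,
      if_congr (show (i = z m hm ∧ k ≠ z m hm ∧ k = k) ↔ (i = z m hm ∧ k ≠ z m hm)
        by tauto) rfl rfl,
      if_congr (show (z m hm = z m hm ∧ i ≠ z m hm ∧ k = i) ↔ (i ≠ z m hm ∧ k = i)
        by tauto) rfl rfl,
      if_congr (show ((k:ℕ) = m - 1 ∧ i = i ∧ 1 ≤ (i:ℕ) ∧ (i:ℕ) ≤ m - 2)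
          ↔ (k = e m hm ∧ Mid m hm i) by rw [← eq_e_iff hm, ← mid_iff hm]; tauto) rfl rfl]
  ring

lemma sumC (hm : 3 ≤ m) (C : Matrix (Fin m) (Fin m) ℂ) (i j k : Fin m) :
    (∑ k', C k k' * TbigCW m (pos3 hm) i j k') =
      (if i = z m hm ∧ j = z m hm then C k (z m hm) else 0)
        + (if i = z m hm ∧ j ≠ z m hm then C k j else 0)
        + (if j = z m hm ∧ i ≠ z m hm then C k i else 0)
        + (if i = j ∧ Mid m hm i then C k (e m hm) else 0) := by
  have hz : (⟨0, by omega⟩ : Fin m) = z m hm := rfl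
  simp only [TbigCW, mul_add, Finset.sum_add_distrib, hz]
  rw [collapse (c := z m hm) (fun x hx => hx.2.2),
      collapse (c := j) (fun x (hx : i = z m hm ∧ j ≠ z m hm ∧ x = j) => hx.2.2),
      collapse (c := i) (fun x (hx : j = z m hm ∧ i ≠ z m hm ∧ x = i) => hx.2.2),
      collapse (c := e m hm) (fun x (hx : (x:ℕ) = m - 1 ∧ _) => (eq_e_iff hm x).mp hx.1)]
  rw [if_congr (show (i = z m hm ∧ j = z m hm ∧ z m hm = z m hm) ↔ (i = z m hm ∧ j = z m hm)
        by tauto) rfl rfl,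
      if_congr (show (i = z m hm ∧ j ≠ z m hm ∧ j = j) ↔ (i = z m hm ∧ j ≠ z m hm)
        by tauto) rfl rfl,
      if_congr (show (j = z m hm ∧ i ≠ z m hm ∧ i = i) ↔ (j = z m hm ∧ i ≠ z m hm)
        by tauto) rfl rfl,
      if_congr (show ((e m hm : ℕ) = m - 1 ∧ i = j ∧ 1 ≤ (i:ℕ) ∧ (i:ℕ) ≤ m - 2)
          ↔ (i = j ∧ Mid m hm i) by
        rw [← mid_iff hm]
        simp [e]) rfl rfl]

lemma action_apply (hm : 3 ≤ m) (A B C : Matrix (Fin m) (Fin m) ℂ) (i j k : Fin m) :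
    tensorActionL m m m (TbigCW m (pos3 hm)) (A, B, C) i j k =
      ((if j = z m hm ∧ k = z m hm then A i (z m hm) else 0)
        + (if j ≠ z m hm ∧ k = j then A i (z m hm) else 0)
        + (if j = z m hm ∧ k ≠ z m hm then A i k else 0)
        + (if k = e m hm ∧ Mid m hm j then A i j else 0))
      + ((if i = z m hm ∧ k = z m hm then B j (z m hm) else 0)
        + (if i ≠ z m hm ∧ k = i then B j (z m hm) else 0)
        + (if i = z m hm ∧ k ≠ z m hm then B j k else 0)
        + (if k = e m hm ∧ Mid m hm i then B j i else 0))
      + ((if i = z m hm ∧ j = z m hm then C k (z m hm) else 0)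
        + (if i = z m hm ∧ j ≠ z m hm then C k j else 0)
        + (if j = z m hm ∧ i ≠ z m hm then C k i else 0)
        + (if i = j ∧ Mid m hm i then C k (e m hm) else 0)) := by
  show (∑ i', A i i' * TbigCW m (by omega) i' j k) + (∑ j', B j j' * TbigCW m (by omega) i j' k)
      + (∑ k', C k k' * TbigCW m (by omega) i j k') = _
  rw [sumA hm, sumB hm, sumC hm]

lemma tri (hm : 3 ≤ m) (x : Fin m) : x = z m hm ∨ x = e m hm ∨ Mid m hm x := by
  by_cases h1 : x = z m hm
  · tauto
  · by_cases h2 : x = e m hm <;> [tauto; exact Or.inr (Or.inr ⟨h1, h2⟩)]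

def Efun (hm : 3 ≤ m) (A B C : Matrix (Fin m) (Fin m) ℂ) (i j k : Fin m) : ℂ :=
      ((if j = z m hm ∧ k = z m hm then A i (z m hm) else 0)
        + (if j ≠ z m hm ∧ k = j then A i (z m hm) else 0)
        + (if j = z m hm ∧ k ≠ z m hm then A i k else 0)
        + (if k = e m hm ∧ Mid m hm j then A i j else 0))
      + ((if i = z m hm ∧ k = z m hm then B j (z m hm) else 0)
        + (if i ≠ z m hm ∧ k = i then B j (z m hm) else 0)
        + (if i = z m hm ∧ k ≠ z m hm then B j k else 0)
        + (if k = e m hm ∧ Mid m hm i then B j i else 0))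
      + ((if i = z m hm ∧ j = z m hm then C k (z m hm) else 0)
        + (if i = z m hm ∧ j ≠ z m hm then C k j else 0)
        + (if j = z m hm ∧ i ≠ z m hm then C k i else 0)
        + (if i = j ∧ Mid m hm i then C k (e m hm) else 0))

def vv (p : Sym2 (Fin m) → ℂ) (i j : Fin m) : ℂ := p s(i, j)
noncomputable def Sk (p : Sym2 (Fin m) → ℂ) (i j : Fin m) : ℂ :=
  if (i : ℕ) < (j : ℕ) then vv p i j else if (j : ℕ) < (i : ℕ) then -(vv p j i) else 0

lemma Sk_add (p : Sym2 (Fin m) → ℂ) (i j : Fin m) : Sk p i j + Sk p j i = 0 := by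
  unfold Sk
  rcases Nat.lt_trichotomy (i : ℕ) (j : ℕ) with h | h | h
  · rw [if_pos h, if_neg (by omega), if_pos h]; ring
  · rw [if_neg (by omega), if_neg (by omega), if_neg (by omega), if_neg (by omega)]; ring
  · rw [if_neg (by omega), if_pos h, if_pos h]; ring

noncomputable def psiA (hm : 3 ≤ m) (p : Sym2 (Fin m) → ℂ) (t₁ : ℂ) :
    Matrix (Fin m) (Fin m) ℂ :=
  fun i j =>
    if i = z m hm then vv p (z m hm) j
    else if i = e m hm then (if j = e m hm then -t₁ - vv p (e m hm) (e m hm) else 0)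
    else if j = z m hm then 0
    else if j = e m hm then vv p i (e m hm)
    else if j = i then (vv p (z m hm) (z m hm) - t₁ - vv p (e m hm) (e m hm)) / 2
    else Sk p i j

noncomputable def psiB (hm : 3 ≤ m) (p : Sym2 (Fin m) → ℂ) (t₁ t₂ : ℂ) :
    Matrix (Fin m) (Fin m) ℂ :=
  fun i j =>
    if i = z m hm then (if j = z m hm then t₁ else if j = e m hm then t₂ else vv p j j)
    else if i = e m hm then
      (if j = e m hm then -(vv p (z m hm) (z m hm)) - vv p (e m hm) (e m hm) else 0)
    else if j = z m hm then 0
    else if j = e m hm then vv p i i + vv p i (e m hm) - vv p (z m hm) i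
    else if j = i then (t₁ - vv p (z m hm) (z m hm) - vv p (e m hm) (e m hm)) / 2
    else Sk p i j

noncomputable def psiC (hm : 3 ≤ m) (p : Sym2 (Fin m) → ℂ) (t₁ t₂ : ℂ) :
    Matrix (Fin m) (Fin m) ℂ :=
  fun i j =>
    if i = z m hm then (if j = z m hm then -(vv p (z m hm) (z m hm)) - t₁ else 0)
    else if i = e m hm then
      (if j = z m hm then -(vv p (z m hm) (e m hm)) - t₂
       else if j = e m hm then vv p (e m hm) (e m hm)
       else -(vv p j j) - vv p j (e m hm))
    else if j = z m hm then -(vv p (z m hm) i) - vv p i i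
    else if j = e m hm then 0
    else if j = i then -(vv p (z m hm) (z m hm) + t₁ - vv p (e m hm) (e m hm)) / 2
    else Sk p i j

section entry
variable (hm : 3 ≤ m) (p : Sym2 (Fin m) → ℂ) (t₁ t₂ : ℂ)

@[simp] lemma psiA_z (j) : psiA hm p t₁ (z m hm) j = vv p (z m hm) j := by simp [psiA]
@[simp] lemma psiA_ee : psiA hm p t₁ (e m hm) (e m hm)
    = -t₁ - vv p (e m hm) (e m hm) := by simp [psiA, (z_ne_e hm).symm]
@[simp] lemma psiA_e_ne {j} (hj : j ≠ e m hm) : psiA hm p t₁ (e m hm) j = 0 := by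
  simp [psiA, (z_ne_e hm).symm, hj]
@[simp] lemma psiA_mz {i} (h1 : i ≠ z m hm) (h2 : i ≠ e m hm) :
    psiA hm p t₁ i (z m hm) = 0 := by simp [psiA, h1, h2]
@[simp] lemma psiA_me {i} (h1 : i ≠ z m hm) (h2 : i ≠ e m hm) :
    psiA hm p t₁ i (e m hm) = vv p i (e m hm) := by simp [psiA, h1, h2, (z_ne_e hm).symm]
@[simp] lemma psiA_diag {i} (h1 : i ≠ z m hm) (h2 : i ≠ e m hm) :
    psiA hm p t₁ i i = (vv p (z m hm) (z m hm) - t₁ - vv p (e m hm) (e m hm)) / 2 := by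
  simp [psiA, h1, h2]
@[simp] lemma psiA_mm {i j} (h1 : i ≠ z m hm) (h2 : i ≠ e m hm) (h3 : j ≠ z m hm)
    (h4 : j ≠ e m hm) (h5 : j ≠ i) : psiA hm p t₁ i j = Sk p i j := by
  simp [psiA, h1, h2, h3, h4, h5]

@[simp] lemma psiB_zz : psiB hm p t₁ t₂ (z m hm) (z m hm) = t₁ := by simp [psiB]
@[simp] lemma psiB_ze : psiB hm p t₁ t₂ (z m hm) (e m hm) = t₂ := by
  simp [psiB, z_ne_e hm, (z_ne_e hm).symm]
@[simp] lemma psiB_zm {j} (h1 : j ≠ z m hm) (h2 : j ≠ e m hm) :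
    psiB hm p t₁ t₂ (z m hm) j = vv p j j := by simp [psiB, h1, h2]
@[simp] lemma psiB_ee : psiB hm p t₁ t₂ (e m hm) (e m hm)
    = -(vv p (z m hm) (z m hm)) - vv p (e m hm) (e m hm) := by
  simp [psiB, (z_ne_e hm).symm]
@[simp] lemma psiB_e_ne {j} (hj : j ≠ e m hm) : psiB hm p t₁ t₂ (e m hm) j = 0 := by
  simp [psiB, (z_ne_e hm).symm, hj]
@[simp] lemma psiB_mz {i} (h1 : i ≠ z m hm) (h2 : i ≠ e m hm) :
    psiB hm p t₁ t₂ i (z m hm) = 0 := by simp [psiB, h1, h2]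
@[simp] lemma psiB_me {i} (h1 : i ≠ z m hm) (h2 : i ≠ e m hm) :
    psiB hm p t₁ t₂ i (e m hm)
      = vv p i i + vv p i (e m hm) - vv p (z m hm) i := by
  simp [psiB, h1, h2, (z_ne_e hm).symm]
@[simp] lemma psiB_diag {i} (h1 : i ≠ z m hm) (h2 : i ≠ e m hm) :
    psiB hm p t₁ t₂ i i
      = (t₁ - vv p (z m hm) (z m hm) - vv p (e m hm) (e m hm)) / 2 := by
  simp [psiB, h1, h2]
@[simp] lemma psiB_mm {i j} (h1 : i ≠ z m hm) (h2 : i ≠ e m hm) (h3 : j ≠ z m hm)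
    (h4 : j ≠ e m hm) (h5 : j ≠ i) : psiB hm p t₁ t₂ i j = Sk p i j := by
  simp [psiB, h1, h2, h3, h4, h5]

@[simp] lemma psiC_zz : psiC hm p t₁ t₂ (z m hm) (z m hm)
    = -(vv p (z m hm) (z m hm)) - t₁ := by simp [psiC]
@[simp] lemma psiC_z_ne {j} (hj : j ≠ z m hm) : psiC hm p t₁ t₂ (z m hm) j = 0 := by
  simp [psiC, hj]
@[simp] lemma psiC_ez : psiC hm p t₁ t₂ (e m hm) (z m hm)
    = -(vv p (z m hm) (e m hm)) - t₂ := by simp [psiC, (z_ne_e hm).symm]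
@[simp] lemma psiC_ee : psiC hm p t₁ t₂ (e m hm) (e m hm)
    = vv p (e m hm) (e m hm) := by simp [psiC, (z_ne_e hm).symm, z_ne_e hm]
@[simp] lemma psiC_em {j} (h1 : j ≠ z m hm) (h2 : j ≠ e m hm) :
    psiC hm p t₁ t₂ (e m hm) j = -(vv p j j) - vv p j (e m hm) := by
  simp [psiC, (z_ne_e hm).symm, h1, h2]
@[simp] lemma psiC_mz {i} (h1 : i ≠ z m hm) (h2 : i ≠ e m hm) :
    psiC hm p t₁ t₂ i (z m hm) = -(vv p (z m hm) i) - vv p i i := by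
  simp [psiC, h1, h2]
@[simp] lemma psiC_me {i} (h1 : i ≠ z m hm) (h2 : i ≠ e m hm) :
    psiC hm p t₁ t₂ i (e m hm) = 0 := by simp [psiC, h1, h2, (z_ne_e hm).symm]
@[simp] lemma psiC_diag {i} (h1 : i ≠ z m hm) (h2 : i ≠ e m hm) :
    psiC hm p t₁ t₂ i i
      = -(vv p (z m hm) (z m hm) + t₁ - vv p (e m hm) (e m hm)) / 2 := by
  simp [psiC, h1, h2]
@[simp] lemma psiC_mm {i j} (h1 : i ≠ z m hm) (h2 : i ≠ e m hm) (h3 : j ≠ z m hm)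
    (h4 : j ≠ e m hm) (h5 : j ≠ i) : psiC hm p t₁ t₂ i j = Sk p i j := by
  simp [psiC, h1, h2, h3, h4, h5]

end entry

lemma psi_ker (hm : 3 ≤ m) (p : Sym2 (Fin m) → ℂ) (t₁ t₂ : ℂ) (i j k : Fin m) :
    Efun hm (psiA hm p t₁) (psiB hm p t₁ t₂) (psiC hm p t₁ t₂) i j k = 0 := by
  have hez : e m hm ≠ z m hm := (z_ne_e hm).symm
  have hze := z_ne_e hm
  rcases tri hm i with rfl | rfl | hi
  · rcases tri hm j with rfl | rfl | hj
    · rcases tri hm k with rfl | rfl | hk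
      · simp [Efun, Mid, hze, hez] <;> ring
      · simp [Efun, Mid, hze, hez] <;> ring
      · simp [Efun, Mid, hze, hez, hk.1, hk.2, hk.1.symm, hk.2.symm] <;> ring
    · rcases tri hm k with rfl | rfl | hk
      · simp [Efun, Mid, hze, hez] <;> ring
      · simp [Efun, Mid, hze, hez] <;> ring
      · simp [Efun, Mid, hze, hez, hk.1, hk.2, hk.1.symm, hk.2.symm] <;> ring
    · rcases tri hm k with rfl | rfl | hk
      · simp [Efun, Mid, hze, hez, hj.1, hj.2, hj.1.symm, hj.2.symm] <;> ring
      · simp [Efun, Mid, hze, hez, hj.1, hj.2, hj.1.symm, hj.2.symm] <;> ring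
      · by_cases hkj : k = j
        · subst hkj
          simp [Efun, Mid, hze, hez, hj.1, hj.2, hj.1.symm, hj.2.symm] <;> ring
        · simp [Efun, Mid, hze, hez, hj.1, hj.2, hk.1, hk.2, hkj, hj.1.symm, hj.2.symm,
            hk.1.symm, hk.2.symm, Ne.symm hkj]
          linear_combination Sk_add p j k
  · rcases tri hm j with rfl | rfl | hj
    · rcases tri hm k with rfl | rfl | hk
      · simp [Efun, Mid, hze, hez] <;> ring
      · simp [Efun, Mid, hze, hez] <;> ring
      · simp [Efun, Mid, hze, hez, hk.1, hk.2, hk.1.symm, hk.2.symm] <;> ring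
    · rcases tri hm k with rfl | rfl | hk
      · simp [Efun, Mid, hze, hez] <;> ring
      · simp [Efun, Mid, hze, hez] <;> ring
      · simp [Efun, Mid, hze, hez, hk.1, hk.2, hk.1.symm, hk.2.symm] <;> ring
    · rcases tri hm k with rfl | rfl | hk
      · simp [Efun, Mid, hze, hez, hj.1, hj.2, hj.1.symm, hj.2.symm] <;> ring
      · simp [Efun, Mid, hze, hez, hj.1, hj.2, hj.1.symm, hj.2.symm] <;> ring
      · by_cases hkj : k = j
        · subst hkj
          simp [Efun, Mid, hze, hez, hj.1, hj.2, hj.1.symm, hj.2.symm] <;> ring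
        · simp [Efun, Mid, hze, hez, hj.1, hj.2, hk.1, hk.2, hkj, hj.1.symm, hj.2.symm,
            hk.1.symm, hk.2.symm, Ne.symm hkj] <;> ring
  · rcases tri hm j with rfl | rfl | hj
    · rcases tri hm k with rfl | rfl | hk
      · simp [Efun, Mid, hze, hez, hi.1, hi.2, hi.1.symm, hi.2.symm] <;> ring
      · simp [Efun, Mid, hze, hez, hi.1, hi.2, hi.1.symm, hi.2.symm] <;> ring
      · by_cases hki : k = i
        · subst hki
          simp [Efun, Mid, hze, hez, hi.1, hi.2, hi.1.symm, hi.2.symm] <;> ring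
        · simp [Efun, Mid, hze, hez, hi.1, hi.2, hk.1, hk.2, hki, hi.1.symm, hi.2.symm,
            hk.1.symm, hk.2.symm, Ne.symm hki]
          linear_combination Sk_add p i k
    · rcases tri hm k with rfl | rfl | hk
      · simp [Efun, Mid, hze, hez, hi.1, hi.2, hi.1.symm, hi.2.symm] <;> ring
      · simp [Efun, Mid, hze, hez, hi.1, hi.2, hi.1.symm, hi.2.symm] <;> ring
      · by_cases hki : k = i
        · subst hki
          simp [Efun, Mid, hze, hez, hi.1, hi.2, hi.1.symm, hi.2.symm] <;> ring
        · simp [Efun, Mid, hze, hez, hi.1, hi.2, hk.1, hk.2, hki, hi.1.symm, hi.2.symm,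
            hk.1.symm, hk.2.symm, Ne.symm hki] <;> ring
    · rcases tri hm k with rfl | rfl | hk
      · by_cases hij : i = j
        · subst hij
          simp [Efun, Mid, hze, hez, hi.1, hi.2, hi.1.symm, hi.2.symm] <;> ring
        · simp [Efun, Mid, hze, hez, hi.1, hi.2, hj.1, hj.2, hij, hi.1.symm, hi.2.symm,
            hj.1.symm, hj.2.symm, Ne.symm hij] <;> ring
      · by_cases hij : i = j
        · subst hij
          simp [Efun, Mid, hze, hez, hi.1, hi.2, hi.1.symm, hi.2.symm] <;> ring
        · simp [Efun, Mid, hze, hez, hi.1, hi.2, hj.1, hj.2, hij, hi.1.symm, hi.2.symm,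
            hj.1.symm, hj.2.symm, Ne.symm hij]
          linear_combination Sk_add p i j
      · by_cases hij : i = j
        · subst hij
          by_cases hki : k = i
          · subst hki
            simp [Efun, Mid, hze, hez, hi.1, hi.2, hi.1.symm, hi.2.symm] <;> ring
          · simp [Efun, Mid, hze, hez, hi.1, hi.2, hk.1, hk.2, hki, hi.1.symm, hi.2.symm,
              hk.1.symm, hk.2.symm, Ne.symm hki] <;> ring
        · by_cases hkj : k = j
          · subst hkj
            simp [Efun, Mid, hze, hez, hi.1, hi.2, hk.1, hk.2, hij, hi.1.symm, hi.2.symm,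
              hk.1.symm, hk.2.symm, Ne.symm hij] <;> ring
          · by_cases hki : k = i
            · subst hki
              simp [Efun, Mid, hze, hez, hi.1, hi.2, hj.1, hj.2, hij, hkj, hi.1.symm,
                hi.2.symm, hj.1.symm, hj.2.symm, Ne.symm hij, Ne.symm hkj] <;> ring
            · simp [Efun, Mid, hze, hez, hi.1, hi.2, hj.1, hj.2, hk.1, hk.2, hij, hkj, hki,
                hi.1.symm, hi.2.symm, hj.1.symm, hj.2.symm, hk.1.symm, hk.2.symm,
                Ne.symm hij, Ne.symm hkj, Ne.symm hki] <;> ring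

lemma action_eq (hm : 3 ≤ m) (A B C : Matrix (Fin m) (Fin m) ℂ) (i j k : Fin m) :
    tensorActionL m m m (TbigCW m (pos3 hm)) (A, B, C) i j k = Efun hm A B C i j k := by
  rw [action_apply hm]; rfl

lemma mem_ker_iff (hm : 3 ≤ m) (A B C : Matrix (Fin m) (Fin m) ℂ) :
    (A, B, C) ∈ LinearMap.ker (tensorActionL m m m (TbigCW m (pos3 hm))) ↔
      ∀ i j k, Efun hm A B C i j k = 0 := by
  rw [LinearMap.mem_ker]
  constructor
  · intro h i j k
    rw [← action_eq hm A B C i j k, h]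
    rfl
  · intro h
    funext i j k
    rw [action_eq hm A B C i j k, h]
    rfl

noncomputable def Psi (hm : 3 ≤ m) :
    ((Sym2 (Fin m) → ℂ) × ℂ × ℂ) →ₗ[ℂ]
      (Matrix (Fin m) (Fin m) ℂ × Matrix (Fin m) (Fin m) ℂ × Matrix (Fin m) (Fin m) ℂ) where
  toFun q := (psiA hm q.1 q.2.1, psiB hm q.1 q.2.1 q.2.2, psiC hm q.1 q.2.1 q.2.2)
  map_add' q r := by
    have hA : psiA hm (q.1 + r.1) (q.2.1 + r.2.1)
        = psiA hm q.1 q.2.1 + psiA hm r.1 r.2.1 := by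
      funext i j
      simp only [psiA, Sk, vv, Matrix.add_apply, Pi.add_apply]
      split_ifs <;> ring
    have hB : psiB hm (q.1 + r.1) (q.2.1 + r.2.1) (q.2.2 + r.2.2)
        = psiB hm q.1 q.2.1 q.2.2 + psiB hm r.1 r.2.1 r.2.2 := by
      funext i j
      simp only [psiB, Sk, vv, Matrix.add_apply, Pi.add_apply]
      split_ifs <;> ring
    have hC : psiC hm (q.1 + r.1) (q.2.1 + r.2.1) (q.2.2 + r.2.2)
        = psiC hm q.1 q.2.1 q.2.2 + psiC hm r.1 r.2.1 r.2.2 := by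
      funext i j
      simp only [psiC, Sk, vv, Matrix.add_apply, Pi.add_apply]
      split_ifs <;> ring
    simp only [Prod.fst_add, Prod.snd_add, Prod.mk_add_mk, hA, hB, hC]
  map_smul' c q := by
    have hA : psiA hm (c • q.1) (c • q.2.1) = c • psiA hm q.1 q.2.1 := by
      funext i j
      simp only [psiA, Sk, vv, Matrix.smul_apply, Pi.smul_apply, smul_eq_mul]
      split_ifs <;> ring
    have hB : psiB hm (c • q.1) (c • q.2.1) (c • q.2.2) = c • psiB hm q.1 q.2.1 q.2.2 := by
      funext i j
      simp only [psiB, Sk, vv, Matrix.smul_apply, Pi.smul_apply, smul_eq_mul]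
      split_ifs <;> ring
    have hC : psiC hm (c • q.1) (c • q.2.1) (c • q.2.2) = c • psiC hm q.1 q.2.1 q.2.2 := by
      funext i j
      simp only [psiC, Sk, vv, Matrix.smul_apply, Pi.smul_apply, smul_eq_mul]
      split_ifs <;> ring
    simp only [Prod.smul_fst, Prod.smul_snd, Prod.smul_mk, RingHom.id_apply, hA, hB, hC]

lemma psi_inj (hm : 3 ≤ m) : LinearMap.ker (Psi hm) = ⊥ := by
  rw [LinearMap.ker_eq_bot']
  rintro ⟨p, t₁, t₂⟩ h
  have hez : e m hm ≠ z m hm := (z_ne_e hm).symm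
  have hze := z_ne_e hm
  have hA : ∀ i j, psiA hm p t₁ i j = 0 := fun i j =>
    congrFun (congrFun (congrArg Prod.fst h) i) j
  have hB : ∀ i j, psiB hm p t₁ t₂ i j = 0 := fun i j =>
    congrFun (congrFun (congrArg (fun x => x.2.1) h) i) j
  have hC : ∀ i j, psiC hm p t₁ t₂ i j = 0 := fun i j =>
    congrFun (congrFun (congrArg (fun x => x.2.2) h) i) j
  have key : ∀ i j : Fin m, p s(i, j) = 0 := by
    intro i j
    rcases tri hm i with rfl | rfl | hi
    · have := hA (z m hm) j
      rwa [psiA_z] at this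
    · rcases tri hm j with rfl | rfl | hj
      · rw [Sym2.eq_swap]
        have := hA (z m hm) (e m hm)
        rwa [psiA_z] at this
      · have := hC (e m hm) (e m hm)
        rwa [psiC_ee] at this
      · rw [Sym2.eq_swap]
        have := hA j (e m hm)
        rwa [psiA_me hm p t₁ hj.1 hj.2] at this
    · rcases tri hm j with rfl | rfl | hj
      · rw [Sym2.eq_swap]
        have := hA (z m hm) i
        rwa [psiA_z] at this
      · have := hA i (e m hm)
        rwa [psiA_me hm p t₁ hi.1 hi.2] at this
      · by_cases hij : i = j
        · subst hij
          have := hB (z m hm) i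
          rwa [psiB_zm hm p t₁ t₂ hi.1 hi.2] at this
        · have hne : (i : ℕ) ≠ (j : ℕ) := fun hc => hij (Fin.ext hc)
          rcases lt_or_gt_of_ne hne with hlt | hgt
          · have := hA i j
            rw [psiA_mm hm p t₁ hi.1 hi.2 hj.1 hj.2 (Ne.symm hij)] at this
            unfold Sk at this
            rwa [if_pos hlt] at this
          · have := hA i j
            rw [psiA_mm hm p t₁ hi.1 hi.2 hj.1 hj.2 (Ne.symm hij)] at this
            unfold Sk at this
            rw [if_neg (Nat.lt_asymm hgt), if_pos hgt] at this
            rw [Sym2.eq_swap]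
            exact neg_eq_zero.mp this
  have hp : p = 0 := by
    funext s
    induction s using Sym2.ind with
    | _ i j => exact key i j
  have ht₁ : t₁ = 0 := by
    have := hB (z m hm) (z m hm)
    rwa [psiB_zz] at this
  have ht₂ : t₂ = 0 := by
    have := hB (z m hm) (e m hm)
    rwa [psiB_ze] at this
  simp [hp, ht₁, ht₂]

def gread (A B C : Matrix (Fin m) (Fin m) ℂ) (hm : 3 ≤ m) (i j : Fin m) : ℂ :=
  if i = z m hm then A (z m hm) j
  else if j = z m hm then A (z m hm) i
  else if i = e m hm then (if j = e m hm then C (e m hm) (e m hm) else A j (e m hm))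
  else if j = e m hm then A i (e m hm)
  else if i = j then B (z m hm) i
  else if (i : ℕ) < (j : ℕ) then A i j else A j i

lemma gread_symm (A B C : Matrix (Fin m) (Fin m) ℂ) (hm : 3 ≤ m) :
    ∀ i j, gread A B C hm i j = gread A B C hm j i := by
  have hez : e m hm ≠ z m hm := (z_ne_e hm).symm
  have hze := z_ne_e hm
  intro i j
  rcases tri hm i with rfl | rfl | hi
  · rcases tri hm j with rfl | rfl | hj
    · rfl
    · simp [gread, hez, hze]
    · simp [gread, hez, hze, hj.1, hj.2]
  · rcases tri hm j with rfl | rfl | hj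
    · simp [gread, hez, hze]
    · rfl
    · simp [gread, hez, hze, hj.1, hj.2]
  · rcases tri hm j with rfl | rfl | hj
    · simp [gread, hez, hze, hi.1, hi.2]
    · simp [gread, hez, hze, hi.1, hi.2]
    · by_cases hij : i = j
      · subst hij; rfl
      · have hne : (i : ℕ) ≠ (j : ℕ) := fun hc => hij (Fin.ext hc)
        rcases lt_or_gt_of_ne hne with hlt | hgt
        · simp [gread, hi.1, hi.2, hj.1, hj.2, hij, Ne.symm hij, hlt, Nat.lt_asymm hlt]
        · simp [gread, hi.1, hi.2, hj.1, hj.2, hij, Ne.symm hij, hgt, Nat.lt_asymm hgt]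

lemma psi_recover (hm : 3 ≤ m) (A B C : Matrix (Fin m) (Fin m) ℂ)
    (hx : ∀ i j k, Efun hm A B C i j k = 0) :
    Psi hm (Sym2.lift ⟨gread A B C hm, gread_symm A B C hm⟩,
      B (z m hm) (z m hm), B (z m hm) (e m hm)) = (A, B, C) := by
  have hez : e m hm ≠ z m hm := (z_ne_e hm).symm
  have hze := z_ne_e hm
  set p : Sym2 (Fin m) → ℂ := Sym2.lift ⟨gread A B C hm, gread_symm A B C hm⟩ with hpdef
  have hvv : ∀ x y, vv p x y = gread A B C hm x y := by
    intro x y; simp [hpdef, vv, Sym2.lift_mk]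
  set w : Fin m := ⟨1, by omega⟩ with hwdef
  have hw1 : w ≠ z m hm := by simp [hwdef, z, Fin.ext_iff]
  have hw2 : w ≠ e m hm := by simp [hwdef, e, Fin.ext_iff]; omega
  have hAez : A (e m hm) (z m hm) = 0 := by
    have h := hx (e m hm) w w
    simpa [Efun, Mid, hez, hze, hw1, hw2, hw1.symm, hw2.symm] using h
  have hBez : B (e m hm) (z m hm) = 0 := by
    have h := hx w (e m hm) w
    simpa [Efun, Mid, hez, hze, hw1, hw2, hw1.symm, hw2.symm] using h
  have hCze : C (z m hm) (e m hm) = 0 := by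
    have h := hx w w (z m hm)
    simpa [Efun, Mid, hez, hze, hw1, hw2, hw1.symm, hw2.symm] using h
  have hmid : ∀ x : Fin m, x ≠ z m hm → x ≠ e m hm →
      A x (z m hm) = 0 ∧ B x (z m hm) = 0 ∧ C x (e m hm) = 0 ∧
        A (e m hm) x = 0 ∧ B (e m hm) x = 0 := by
    intro x h1 h2
    have h3 := hx x (e m hm) (e m hm)
    have h4 := hx (z m hm) (e m hm) x
    have h5 := hx (e m hm) x (e m hm)
    have h6 := hx (e m hm) (z m hm) x
    have h7 := hx x x x
    simp [Efun, Mid, hez, hze, h1, h2, h1.symm, h2.symm] at h3 h4 h5 h6 h7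
    refine ⟨?_, ?_, ?_, ?_, ?_⟩
    · linear_combination (2*h3 - 2*h4 - h5 + h6 + h7) / 3
    · linear_combination (-h3 + h4 + 2*h5 - 2*h6 + h7) / 3
    · linear_combination (-h3 + h4 - h5 + h6 + h7) / 3
    · linear_combination (h3 - h4 + h5 + 2*h6 - h7) / 3
    · linear_combination (h3 + 2*h4 + h5 - h6 - h7) / 3
  have hA : psiA hm p (B (z m hm) (z m hm)) = A := by
    funext i j
    rcases tri hm i with rfl | rfl | hi
    · rw [psiA_z]
      simp only [hvv]
      simp [gread]
    · rcases tri hm j with rfl | rfl | hj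
      · rw [psiA_e_ne hm p _ hze]
        exact hAez.symm
      · rw [psiA_ee]
        simp only [hvv]
        have h14 := hx (e m hm) (z m hm) (e m hm)
        simp [Efun, Mid, hez, hze] at h14
        simp [gread, hez, hze]
        first | linear_combination h14 | linear_combination -h14
      · rw [psiA_e_ne hm p _ hj.2]
        exact ((hmid j hj.1 hj.2).2.2.2.1).symm
    · rcases tri hm j with rfl | rfl | hj
      · rw [psiA_mz hm p _ hi.1 hi.2]
        exact ((hmid i hi.1 hi.2).1).symm
      · rw [psiA_me hm p _ hi.1 hi.2]
        simp only [hvv]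
        simp [gread, hez, hze, hi.1, hi.2]
      · by_cases hij : i = j
        · subst hij
          rw [psiA_diag hm p _ hi.1 hi.2]
          simp only [hvv]
          have h15 := hx i (z m hm) i
          have h16 := hx (z m hm) i i
          have h17 := hx i i (e m hm)
          simp [Efun, Mid, hez, hze, hi.1, hi.2, hi.1.symm, hi.2.symm] at h15 h16 h17
          simp [gread, hez, hze, hi.1, hi.2]
          first
          | linear_combination (h15 - h16 + h17) / 2
          | linear_combination -(h15 - h16 + h17) / 2
        · rw [psiA_mm hm p _ hi.1 hi.2 hj.1 hj.2 (Ne.symm hij)]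
          unfold Sk
          have hne : (i : ℕ) ≠ (j : ℕ) := fun hc => hij (Fin.ext hc)
          rcases lt_or_gt_of_ne hne with hlt | hgt
          · rw [if_pos hlt]
            simp only [hvv]
            simp [gread, hez, hze, hi.1, hi.2, hj.1, hj.2, hij, hlt]
          · rw [if_neg (Nat.lt_asymm hgt), if_pos hgt]
            simp only [hvv]
            simp [gread, hez, hze, hi.1, hi.2, hj.1, hj.2, hij, Ne.symm hij, hgt, Nat.lt_asymm hgt]
            have h20 := hx j i (e m hm)
            have h21 := hx i (z m hm) j
            have h22 := hx (z m hm) i j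
            simp [Efun, Mid, hez, hze, hi.1, hi.2, hj.1, hj.2, hij, Ne.symm hij,
              hi.1.symm, hi.2.symm, hj.1.symm, hj.2.symm] at h20 h21 h22
            first
            | linear_combination -h20 + h22 - h21
            | linear_combination h20 - h22 + h21
  have hB : psiB hm p (B (z m hm) (z m hm)) (B (z m hm) (e m hm)) = B := by
    funext i j
    rcases tri hm i with rfl | rfl | hi
    · rcases tri hm j with rfl | rfl | hj
      · rw [psiB_zz]
      · rw [psiB_ze]
      · rw [psiB_zm hm p _ _ hj.1 hj.2]
        simp only [hvv]
        simp [gread, hez, hze, hj.1, hj.2]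
    · rcases tri hm j with rfl | rfl | hj
      · rw [psiB_e_ne hm p _ _ hze]
        exact hBez.symm
      · rw [psiB_ee]
        simp only [hvv]
        have h10 := hx (z m hm) (e m hm) (e m hm)
        simp [Efun, Mid, hez, hze] at h10
        simp [gread, hez, hze]
        first | linear_combination -h10 | linear_combination h10
      · rw [psiB_e_ne hm p _ _ hj.2]
        exact ((hmid j hj.1 hj.2).2.2.2.2).symm
    · rcases tri hm j with rfl | rfl | hj
      · rw [psiB_mz hm p _ _ hi.1 hi.2]
        exact ((hmid i hi.1 hi.2).2.1).symm
      · rw [psiB_me hm p _ _ hi.1 hi.2]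
        simp only [hvv]
        have h18 := hx (z m hm) i (e m hm)
        have h19 := hx i (z m hm) (e m hm)
        simp [Efun, Mid, hez, hze, hi.1, hi.2, hi.1.symm, hi.2.symm] at h18 h19
        simp [gread, hez, hze, hi.1, hi.2]
        first | linear_combination h19 - h18 | linear_combination h18 - h19
      · by_cases hij : i = j
        · subst hij
          rw [psiB_diag hm p _ _ hi.1 hi.2]
          simp only [hvv]
          have h15 := hx i (z m hm) i
          have h16 := hx (z m hm) i i
          have h17 := hx i i (e m hm)
          simp [Efun, Mid, hez, hze, hi.1, hi.2, hi.1.symm, hi.2.symm] at h15 h16 h17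
          simp [gread, hez, hze, hi.1, hi.2]
          first
          | linear_combination (h15 - h16 - h17) / 2
          | linear_combination -(h15 - h16 - h17) / 2
          | linear_combination (-h15 + h16 + h17) / 2
        · rw [psiB_mm hm p _ _ hi.1 hi.2 hj.1 hj.2 (Ne.symm hij)]
          unfold Sk
          have hne : (i : ℕ) ≠ (j : ℕ) := fun hc => hij (Fin.ext hc)
          have h20 := hx j i (e m hm)
          have h21 := hx i (z m hm) j
          have h22 := hx (z m hm) i j
          simp [Efun, Mid, hez, hze, hi.1, hi.2, hj.1, hj.2, hij, Ne.symm hij,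
            hi.1.symm, hi.2.symm, hj.1.symm, hj.2.symm] at h20 h21 h22
          rcases lt_or_gt_of_ne hne with hlt | hgt
          · rw [if_pos hlt]
            simp only [hvv]
            simp [gread, hez, hze, hi.1, hi.2, hj.1, hj.2, hij, hlt]
            first | linear_combination h21 - h22 | linear_combination h22 - h21
          · rw [if_neg (Nat.lt_asymm hgt), if_pos hgt]
            simp only [hvv]
            simp [gread, hez, hze, hi.1, hi.2, hj.1, hj.2, hij, Ne.symm hij, hgt, Nat.lt_asymm hgt]
            first | linear_combination -h20 | linear_combination h20
  have hC : psiC hm p (B (z m hm) (z m hm)) (B (z m hm) (e m hm)) = C := by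
    funext i j
    rcases tri hm i with rfl | rfl | hi
    · rcases tri hm j with rfl | rfl | hj
      · rw [psiC_zz]
        simp only [hvv]
        have h1 := hx (z m hm) (z m hm) (z m hm)
        simp [Efun, Mid, hez, hze] at h1
        simp [gread]
        first | linear_combination -h1 | linear_combination h1
      · rw [psiC_z_ne hm p _ _ hez]
        exact hCze.symm
      · rw [psiC_z_ne hm p _ _ hj.1]
        have h9 := hx (z m hm) j (z m hm)
        simp [Efun, Mid, hez, hze, hj.1, hj.2, hj.1.symm, hj.2.symm] at h9
        have hBjz := (hmid j hj.1 hj.2).2.1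
        first | linear_combination -h9 + hBjz | linear_combination h9 - hBjz
    · rcases tri hm j with rfl | rfl | hj
      · rw [psiC_ez]
        simp only [hvv]
        have h12 := hx (z m hm) (z m hm) (e m hm)
        simp [Efun, Mid, hez, hze] at h12
        simp [gread, hez, hze]
        first | linear_combination -h12 | linear_combination h12
      · rw [psiC_ee]
        simp only [hvv]
        simp [gread, hez, hze]
      · rw [psiC_em hm p _ _ hj.1 hj.2]
        simp only [hvv]
        have h19 := hx j (z m hm) (e m hm)
        simp [Efun, Mid, hez, hze, hj.1, hj.2, hj.1.symm, hj.2.symm] at h19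
        simp [gread, hez, hze, hj.1, hj.2]
        first | linear_combination -h19 | linear_combination h19
    · rcases tri hm j with rfl | rfl | hj
      · rw [psiC_mz hm p _ _ hi.1 hi.2]
        simp only [hvv]
        have h11 := hx (z m hm) (z m hm) i
        simp [Efun, Mid, hez, hze, hi.1, hi.2, hi.1.symm, hi.2.symm] at h11
        simp [gread, hez, hze, hi.1, hi.2]
        first | linear_combination -h11 | linear_combination h11
      · rw [psiC_me hm p _ _ hi.1 hi.2]
        exact ((hmid i hi.1 hi.2).2.2.1).symm
      · by_cases hij : i = j
        · subst hij
          rw [psiC_diag hm p _ _ hi.1 hi.2]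
          simp only [hvv]
          have h15 := hx i (z m hm) i
          have h16 := hx (z m hm) i i
          have h17 := hx i i (e m hm)
          simp [Efun, Mid, hez, hze, hi.1, hi.2, hi.1.symm, hi.2.symm] at h15 h16 h17
          simp [gread, hez, hze, hi.1, hi.2]
          first
          | linear_combination -(h15 + h16 - h17) / 2
          | linear_combination (h15 + h16 - h17) / 2
        · rw [psiC_mm hm p _ _ hi.1 hi.2 hj.1 hj.2 (Ne.symm hij)]
          unfold Sk
          have hne : (i : ℕ) ≠ (j : ℕ) := fun hc => hij (Fin.ext hc)
          have h20 := hx j i (e m hm)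
          have h21 := hx i (z m hm) j
          have h22 := hx (z m hm) i j
          have h23 := hx j (z m hm) i
          simp [Efun, Mid, hez, hze, hi.1, hi.2, hj.1, hj.2, hij, Ne.symm hij,
            hi.1.symm, hi.2.symm, hj.1.symm, hj.2.symm] at h20 h21 h22 h23
          rcases lt_or_gt_of_ne hne with hlt | hgt
          · rw [if_pos hlt]
            simp only [hvv]
            simp [gread, hez, hze, hi.1, hi.2, hj.1, hj.2, hij, hlt]
            first
            | linear_combination h20 - h22 + h21 - h23
            | linear_combination -(h20 - h22 + h21 - h23)
          · rw [if_neg (Nat.lt_asymm hgt), if_pos hgt]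
            simp only [hvv]
            simp [gread, hez, hze, hi.1, hi.2, hj.1, hj.2, hij, Ne.symm hij, hgt, Nat.lt_asymm hgt]
            first | linear_combination -h23 | linear_combination h23
  have hshow : Psi hm (p, B (z m hm) (z m hm), B (z m hm) (e m hm))
      = (psiA hm p (B (z m hm) (z m hm)),
         psiB hm p (B (z m hm) (z m hm)) (B (z m hm) (e m hm)),
         psiC hm p (B (z m hm) (z m hm)) (B (z m hm) (e m hm))) := rfl
  rw [hshow, hA, hB, hC]

lemma range_eq_ker (hm : 3 ≤ m) :
    LinearMap.range (Psi hm)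
      = LinearMap.ker (tensorActionL m m m (TbigCW m (pos3 hm))) := by
  apply le_antisymm
  · rintro y ⟨q, rfl⟩
    exact (mem_ker_iff hm _ _ _).mpr (psi_ker hm q.1 q.2.1 q.2.2)
  · rintro ⟨A, B, C⟩ hk
    rw [mem_ker_iff hm] at hk
    exact ⟨_, psi_recover hm A B C hk⟩

end CWp

/-- For `m ≥ 3`, `dim G_{T_{CW,m−2}} = (m² + m)/2`; equivalently the annihilator
of `T_{CW,m−2}` in `gl_m ⊕ gl_m ⊕ gl_m` has dimension `(m² + m)/2 + 2`. -/
theorem dim_annihilator_TbigCW (m : ℕ) (hm : 3 ≤ m) :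
    Module.finrank ℂ (LinearMap.ker (tensorActionL m m m (TbigCW m (by omega))))
      = (m ^ 2 + m) / 2 + 2 ∧
    Module.finrank ℂ (LinearMap.ker (tensorActionL m m m (TbigCW m (by omega)))) - 2
      = (m ^ 2 + m) / 2 := by
  have e1 : ((Sym2 (Fin m) → ℂ) × ℂ × ℂ) ≃ₗ[ℂ]
      (LinearMap.ker (tensorActionL m m m (TbigCW m (by omega)))) :=
    (LinearEquiv.ofInjective (CWp.Psi hm)
      (LinearMap.ker_eq_bot.mp (CWp.psi_inj hm))).trans
      (LinearEquiv.ofEq _ _ (CWp.range_eq_ker hm))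
  have h2 : Module.finrank ℂ
      (LinearMap.ker (tensorActionL m m m (TbigCW m (by omega))))
      = Fintype.card (Sym2 (Fin m)) + 2 := by
    rw [← LinearEquiv.finrank_eq e1, Module.finrank_prod, Module.finrank_prod,
      Module.finrank_pi, Module.finrank_self]
  have h3 : Fintype.card (Sym2 (Fin m)) = (m ^ 2 + m) / 2 := by
    rw [Sym2.card, Fintype.card_fin, Nat.choose_two_right]
    have h4 : (m + 1) * ((m + 1) - 1) = m ^ 2 + m := by
      simp [Nat.add_sub_cancel]; ring
    rw [h4]
  constructor <;> omega
end
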